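/- arXiv:1010.3471 — 5 statements merged into one kernel-verified Lean document; each statement's English description precedes it below -/
import Mathlib

section
/- With respect to the sine-Gordon Poisson bracket {g,h}_f = Σ_{i<j} f_i f_j (∂g/∂f_i ∂h/∂f_j − ∂g/∂f_j ∂h/∂f_i), one has {Θ^{1,p}_{r,ε}, Θ^{1,p}_{s,ε}}_f = 0 whenever r and s are both odd or both even. -/
/-- `Θ^{1,p}_{r,ε}[x] = Σ_{1 ≤ i₁ < … < i_r ≤ p} Π_j x_{i_j}^{(-1)^{j+ε}}`, equal to `1` for
`r = 0` and to `0` for `r < 0` or `r > p` (the latter automatically). `ε` acts mod 2. -/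
noncomputable def Theta (p : ℕ) (ε : ℕ) (r : ℤ) (x : Fin p → ℝ) : ℝ :=
  if 0 ≤ r then
    ∑ s ∈ (Finset.univ : Finset (Fin p)).powersetCard r.toNat,
      (((s.sort (· ≤ ·)).zipIdx).map (fun ji => x ji.1 ^ ((-1 : ℤ) ^ (ji.2 + 1 + ε)))).prod
  else 0

/-- The sine-Gordon Poisson bracket
`{g,h}_f = Σ_{i<j} f_i f_j (∂g/∂f_i ∂h/∂f_j − ∂g/∂f_j ∂h/∂f_i)`. -/
noncomputable def pbSG (p : ℕ) (g h : (Fin p → ℝ) → ℝ) (x : Fin p → ℝ) : ℝ :=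
  ∑ i : Fin p, ∑ j : Fin p,
    if i < j then
      x i * x j *
        (fderiv ℝ g x (Pi.single i 1) * fderiv ℝ h x (Pi.single j 1) -
          fderiv ℝ g x (Pi.single j 1) * fderiv ℝ h x (Pi.single i 1))
    else 0

/-!
Write `Θ_r = Σ_{|S| = r} x ^ (e • a_S)` with `e = (-1) ^ (ε + 1)`, where `a_S ∈ {0, ±1}^p` is
the increment vector of the parity path `c_S t = #{i ∈ S | i < t} mod 2`. Since
`x_k ∂_k x ^ n = n_k x ^ n`, the bracket of two monomials is `x ^ (e • (a_S + a_T))` times the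
pairing `B(S, T) = Σ_{i<j} (a_S i * a_T j - a_S j * a_T i)`. If `|S| ≡ |T| (mod 2)` the paths
`c_S` and `c_T` agree at both ends, and `2 B(S, T)` telescopes to a sum of boundary terms `±1`, two
for each block (maximal interval on which `c_S ≠ c_T`); a block contributes only when its two
boundary terms agree. Exchanging `S` and `T` inside such a block preserves `|S|`, `|T|` and
`a_S + a_T` and negates the block's contribution, so these contributions cancel in pairs.
-/

namespace ThetaBracket

open Finset
open scoped Classical

variable {p : ℕ}

section ParityPath

variable (S : Finset (Fin p))

def countBelow (t : ℕ) : ℕ := #(S.filter fun i => i.val < t)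

def parity (t : ℕ) : ℤ := (countBelow S t % 2 : ℕ)

def jump (n : ℕ) : ℤ := parity S (n + 1) - parity S n

lemma countBelow_eq_sum (t : ℕ) :
    countBelow S t = ∑ i : Fin p, if i ∈ S ∧ i.val < t then 1 else 0 := by
  simp only [countBelow, card_filter, ite_and, sum_ite_mem, univ_inter]

lemma countBelow_zero : countBelow S 0 = 0 := by simp [countBelow]

lemma countBelow_of_le {t : ℕ} (h : p ≤ t) : countBelow S t = #S := by
  rw [countBelow, filter_true_of_mem fun i _ => i.isLt.trans_le h]

lemma countBelow_succ (i : Fin p) :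
    countBelow S (i + 1) = countBelow S i + if i ∈ S then 1 else 0 := by
  simp only [countBelow, card_filter]
  rw [← sum_ite_eq' S i fun _ => 1, ← sum_add_distrib]
  refine sum_congr rfl fun j _ => ?_
  simp only [Fin.ext_iff]
  split_ifs <;> omega

lemma parity_zero : parity S 0 = 0 := by simp [parity, countBelow_zero]

lemma parity_eq_zero_or_one (t : ℕ) : parity S t = 0 ∨ parity S t = 1 := by
  unfold parity; omega

lemma parity_of_le {t : ℕ} (h : p ≤ t) : parity S t = (#S % 2 : ℕ) := by
  rw [parity, countBelow_of_le S h]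

lemma jump_eq (i : Fin p) : jump S i = if i ∈ S then (-1) ^ countBelow S i else 0 := by
  unfold jump parity
  rw [countBelow_succ]
  split_ifs
  · rcases Nat.even_or_odd (countBelow S i) with h | h <;> rw [h.neg_one_pow]
    · rw [Nat.even_iff] at h
      omega
    · rw [Nat.odd_iff] at h
      omega
  · simp

lemma jump_of_le {n : ℕ} (h : p ≤ n) : jump S n = 0 := by
  rw [jump, parity_of_le S h, parity_of_le S (by omega), sub_self]

lemma jump_sq (n : ℕ) : jump S n ^ 2 = (countBelow S (n + 1) : ℤ) - countBelow S n := by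
  rcases lt_or_ge n p with hn | hn
  · have hsucc := countBelow_succ S ⟨n, hn⟩
    have hjump := jump_eq S ⟨n, hn⟩
    simp only at hsucc hjump
    rw [hjump, hsucc]
    split_ifs
    · rw [← pow_mul, mul_comm, pow_mul, neg_one_sq, one_pow]
      push_cast
      ring
    · simp
  · rw [jump_of_le S hn, countBelow_of_le S hn, countBelow_of_le S (by omega)]
    simp

lemma sum_jump_sq_Ico {L R : ℕ} (h : L ≤ R) :
    ∑ m ∈ Ico L R, jump S m ^ 2 = (countBelow S R : ℤ) - countBelow S L := by
  simp only [jump_sq]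
  exact sum_Ico_sub (fun n => (countBelow S n : ℤ)) h

lemma sum_jump_lt (j : Fin p) : ∑ i : Fin p, (if i < j then jump S i else 0) = parity S j := by
  simp only [Fin.lt_def]
  rw [Fin.sum_univ_eq_sum_range (fun n => if n < (j : ℕ) then jump S n else 0), ← sum_filter,
    ← Nat.Iio_eq_range, Iio_filter_lt, min_eq_right j.isLt.le, Nat.Iio_eq_range]
  simp only [jump]
  rw [sum_range_sub (parity S), parity_zero, sub_zero]

end ParityPath

section Blocks

variable (S T : Finset (Fin p))

def parityDiff (t : ℕ) : ℤ := parity S t - parity T t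

def paritySum (t : ℕ) : ℤ := parity S t + parity T t

/-- The summand of `2 * crossSum S T` once the telescoping part `parityDiff * paritySum` is
removed (`two_mul_crossSum`). -/
def edgeTerm (n : ℕ) : ℤ :=
  (parityDiff S T n + parityDiff S T (n + 1)) * (paritySum S T (n + 1) - paritySum S T n)

structure IsBlock (L R : ℕ) : Prop where
  left : parityDiff S T L = 0
  right : parityDiff S T R = 0
  two_le : L + 2 ≤ R
  le : R ≤ p
  inner : ∀ t, L < t → t < R → parityDiff S T t ≠ 0

variable {S T}

lemma paritySum_eq_one {t : ℕ} (h : parityDiff S T t ≠ 0) : paritySum S T t = 1 := by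
  unfold parityDiff at h
  unfold paritySum
  rcases parity_eq_zero_or_one S t with h1 | h1 <;>
    rcases parity_eq_zero_or_one T t with h2 | h2 <;> omega

lemma parityDiff_of_le {t : ℕ} (h : p ≤ t) : parityDiff S T t = parityDiff S T p := by
  simp only [parityDiff, parity_of_le _ h, parity_of_le _ le_rfl]

lemma edgeTerm_of_le {n : ℕ} (h : p ≤ n) : edgeTerm S T n = 0 := by
  simp [edgeTerm, paritySum, parity_of_le _ h, parity_of_le _ (h.trans n.le_succ)]

lemma lt_of_edgeTerm_ne_zero {n : ℕ} (hg : edgeTerm S T n ≠ 0) : n < p := by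
  by_contra! h
  exact hg (edgeTerm_of_le h)

lemma parityDiff_succ_ne_zero {n : ℕ} (hg : edgeTerm S T n ≠ 0) (h : parityDiff S T n = 0) :
    parityDiff S T (n + 1) ≠ 0 := by
  intro h1
  simp [edgeTerm, h, h1] at hg

lemma parityDiff_succ_eq_zero {n : ℕ} (hg : edgeTerm S T n ≠ 0) (h : parityDiff S T n ≠ 0) :
    parityDiff S T (n + 1) = 0 := by
  by_contra h1
  simp [edgeTerm, paritySum_eq_one h, paritySum_eq_one h1] at hg

lemma edgeTerm_eq_one_or_neg_one {n : ℕ} (h : parityDiff S T n = 0 ∨ parityDiff S T (n + 1) = 0)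
    (hne : parityDiff S T n ≠ 0 ∨ parityDiff S T (n + 1) ≠ 0) :
    edgeTerm S T n = 1 ∨ edgeTerm S T n = -1 := by
  unfold edgeTerm paritySum parityDiff at *
  rcases parity_eq_zero_or_one S n with h1 | h1 <;>
    rcases parity_eq_zero_or_one T n with h2 | h2 <;>
    rcases parity_eq_zero_or_one S (n + 1) with h3 | h3 <;>
    rcases parity_eq_zero_or_one T (n + 1) with h4 | h4 <;> simp_all

namespace IsBlock

variable {L R : ℕ} (hB : IsBlock S T L R)
include hB

lemma edgeTerm_left : edgeTerm S T L = 1 ∨ edgeTerm S T L = -1 := by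
  have := hB.two_le
  exact edgeTerm_eq_one_or_neg_one (.inl hB.left) (.inr (hB.inner _ (by omega) (by omega)))

lemma edgeTerm_right : edgeTerm S T (R - 1) = 1 ∨ edgeTerm S T (R - 1) = -1 := by
  have := hB.two_le
  have hR : R - 1 + 1 = R := by omega
  exact edgeTerm_eq_one_or_neg_one (.inr (hR ▸ hB.right))
    (.inl (hB.inner _ (by omega) (by omega)))

lemma edgeTerm_add_eq_zero (h : edgeTerm S T L ≠ edgeTerm S T (R - 1)) :
    edgeTerm S T L + edgeTerm S T (R - 1) = 0 := by
  rcases hB.edgeTerm_left with h1 | h1 <;> rcases hB.edgeTerm_right with h2 | h2 <;> omega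

lemma right_unique {R' : ℕ} (hB' : IsBlock S T L R') : R = R' := by
  by_contra h
  rcases Nat.lt_or_gt_of_ne h with h | h
  · exact hB'.inner R (by have := hB.two_le; omega) h hB.right
  · exact hB.inner R' (by have := hB'.two_le; omega) h hB'.right

lemma left_unique {L' : ℕ} (hB' : IsBlock S T L' R) : L = L' := by
  by_contra h
  rcases Nat.lt_or_gt_of_ne h with h | h
  · exact hB.inner L' h (by have := hB'.two_le; omega) hB'.left
  · exact hB'.inner L h (by have := hB.two_le; omega) hB.left

end IsBlock

lemma exists_isBlock_right (hp : parityDiff S T p = 0) {L : ℕ} (hL : parityDiff S T L = 0)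
    (hL1 : parityDiff S T (L + 1) ≠ 0) : ∃ R, IsBlock S T L R := by
  have hLp : L + 1 < p := by
    by_contra! h
    exact hL1 (by rw [parityDiff_of_le h, hp])
  have hex : ∃ t, L < t ∧ parityDiff S T t = 0 := ⟨p, by omega, hp⟩
  have hspec := Nat.find_spec hex
  refine ⟨Nat.find hex, hL, hspec.2, ?_, Nat.find_le ⟨by omega, hp⟩, ?_⟩
  · by_contra! h
    rw [show Nat.find hex = L + 1 by omega] at hspec
    exact hL1 hspec.2
  · intro t ht htR h0
    exact Nat.find_min hex htR ⟨ht, h0⟩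

lemma exists_isBlock_left {n : ℕ} (hn : n < p) (h : parityDiff S T n ≠ 0)
    (h1 : parityDiff S T (n + 1) = 0) : ∃ L, IsBlock S T L (n + 1) := by
  set L := Nat.findGreatest (fun t => parityDiff S T t = 0) n
  have hL : parityDiff S T L = 0 :=
    Nat.findGreatest_spec (P := fun t => parityDiff S T t = 0) (Nat.zero_le n)
      (by simp [parityDiff, parity_zero])
  have hLn : L < n := lt_of_le_of_ne (Nat.findGreatest_le n) fun hc => h (hc ▸ hL)
  exact ⟨L, hL, h1, by omega, hn, fun t ht htn => Nat.findGreatest_is_greatest ht (by omega)⟩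

end Blocks

section CrossSum

variable (S T : Finset (Fin p))

def crossSum : ℤ :=
  ∑ i : Fin p, ∑ j : Fin p, if i < j then jump S i * jump T j - jump S j * jump T i else 0

lemma crossSum_eq :
    crossSum S T = ∑ n ∈ range p, (parity S n * jump T n - parity T n * jump S n) := by
  have hsplit : ∀ i j : Fin p,
      (if i < j then jump S i * jump T j - jump S j * jump T i else 0)
        = (if i < j then jump S i else 0) * jump T j -
            jump S j * (if i < j then jump T i else 0) := by
    intro i j
    split_ifs <;> ring
  simp only [crossSum, hsplit, sum_sub_distrib]
  rw [sum_comm (f := fun i j : Fin p => (if i < j then jump S i else 0) * jump T j),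
    sum_comm (f := fun i j : Fin p => jump S j * (if i < j then jump T i else 0))]
  simp only [← sum_mul, ← mul_sum, sum_jump_lt, ← sum_sub_distrib]
  rw [← Fin.sum_univ_eq_sum_range (fun n => parity S n * jump T n - parity T n * jump S n)]
  exact sum_congr rfl fun j _ => by ring

variable {S T}

lemma two_mul_crossSum (hp : parityDiff S T p = 0) :
    2 * crossSum S T = ∑ n ∈ range p, edgeTerm S T n := by
  have key : ∀ n, 2 * (parity S n * jump T n - parity T n * jump S n) = edgeTerm S T n -
      (parityDiff S T (n + 1) * paritySum S T (n + 1) - parityDiff S T n * paritySum S T n) := by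
    intro n
    simp only [edgeTerm, parityDiff, paritySum, jump]
    ring
  rw [crossSum_eq, mul_sum]
  simp only [key]
  rw [sum_sub_distrib, sum_range_sub (fun n => parityDiff S T n * paritySum S T n), hp]
  simp [parityDiff, parity_zero]

lemma sum_isBlock_right (hp : parityDiff S T p = 0) (L : ℕ) :
    ∑ R ∈ range (p + 1), (if IsBlock S T L R then edgeTerm S T L else 0)
      = if parityDiff S T L = 0 then edgeTerm S T L else 0 := by
  by_cases hg : edgeTerm S T L = 0
  · simp [hg]
  by_cases hL : parityDiff S T L = 0
  · obtain ⟨R, hB⟩ := exists_isBlock_right hp hL (parityDiff_succ_ne_zero hg hL)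
    rw [if_pos hL, sum_eq_single_of_mem R (mem_range.2 (Nat.lt_succ_of_le hB.le))
      fun R' _ hR' => if_neg fun hB' => hR' (hB.right_unique hB').symm, if_pos hB]
  · rw [if_neg hL]
    exact sum_eq_zero fun R _ => if_neg fun hB => hL hB.left

lemma sum_isBlock_left (n : ℕ) :
    ∑ L ∈ range (p + 1), (if IsBlock S T L (n + 1) then edgeTerm S T n else 0)
      = if parityDiff S T n = 0 then 0 else edgeTerm S T n := by
  by_cases hg : edgeTerm S T n = 0
  · simp [hg]
  by_cases hn : parityDiff S T n = 0
  · rw [if_pos hn]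
    exact sum_eq_zero fun L _ => if_neg fun hB =>
      hB.inner n (by have := hB.two_le; omega) (by omega) hn
  · obtain ⟨L, hB⟩ :=
      exists_isBlock_left (lt_of_edgeTerm_ne_zero hg) hn (parityDiff_succ_eq_zero hg hn)
    have hLp : L < p + 1 := by have := hB.two_le; have := hB.le; omega
    rw [if_neg hn, sum_eq_single_of_mem L (mem_range.2 hLp)
      fun L' _ hL' => if_neg fun hB' => hL' (hB.left_unique hB').symm, if_pos hB]

lemma sum_edgeTerm_eq_sum_isBlock (hp : parityDiff S T p = 0) :
    ∑ n ∈ range p, edgeTerm S T n = ∑ L ∈ range (p + 1), ∑ R ∈ range (p + 1),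
      if IsBlock S T L R then edgeTerm S T L + edgeTerm S T (R - 1) else 0 := by
  simp only [ite_add_zero, sum_add_distrib, sum_isBlock_right hp]
  rw [sum_comm (s := range (p + 1)) (t := range (p + 1)), sum_range_succ, sum_range_succ']
  simp only [Nat.add_sub_cancel, sum_isBlock_left, edgeTerm_of_le le_rfl, ite_self, add_zero]
  have hR0 : ∀ L, ¬ IsBlock S T L 0 := fun L hB => by have := hB.two_le; omega
  simp only [hR0, if_false, sum_const_zero, add_zero, ← sum_add_distrib]
  exact sum_congr rfl fun n _ => by split_ifs <;> simp

lemma crossSum_eq_sum_balanced_blocks (hp : parityDiff S T p = 0) :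
    crossSum S T = ∑ L ∈ range (p + 1), ∑ R ∈ range (p + 1),
      if IsBlock S T L R ∧ edgeTerm S T L = edgeTerm S T (R - 1) then edgeTerm S T L else 0 := by
  have h := two_mul_crossSum hp
  rw [sum_edgeTerm_eq_sum_isBlock hp] at h
  refine mul_left_cancel₀ (two_ne_zero' ℤ) (h.trans ?_)
  simp only [mul_sum]
  refine sum_congr rfl fun L _ => sum_congr rfl fun R _ => ?_
  by_cases hB : IsBlock S T L R
  · by_cases hbal : edgeTerm S T L = edgeTerm S T (R - 1)
    · simp only [hB, hbal, and_self, if_true]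
      ring
    · simp [hB, hbal, hB.edgeTerm_add_eq_zero hbal]
  · simp [hB]

end CrossSum

section Swap

variable (S T : Finset (Fin p)) (L R : ℕ)

def swapOn : Finset (Fin p) :=
  univ.filter fun i => if L ≤ i.val ∧ i.val < R then i ∈ T else i ∈ S

variable {S T L R}

lemma mem_swapOn {i : Fin p} :
    i ∈ swapOn S T L R ↔ if L ≤ i.val ∧ i.val < R then i ∈ T else i ∈ S := by
  simp [swapOn]

lemma swapOn_swapOn : swapOn (swapOn S T L R) (swapOn T S L R) L R = S := by
  ext i
  simp only [mem_swapOn]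
  split_ifs <;> rfl

lemma countBelow_swapOn (hLR : L ≤ R) (t : ℕ) :
    countBelow (swapOn S T L R) t + countBelow S (min R t) + countBelow T (min L t)
      = countBelow S t + countBelow S (min L t) + countBelow T (min R t) := by
  simp only [countBelow_eq_sum, ← sum_add_distrib]
  refine sum_congr rfl fun i _ => ?_
  simp only [mem_swapOn, lt_min_iff]
  by_cases hS : i ∈ S <;> by_cases hT : i ∈ T <;> by_cases hB : L ≤ i.val ∧ i.val < R <;>
    simp only [hS, hT, hB, true_and, false_and, if_true, if_false] <;> split_ifs <;> omega

lemma parity_swapOn (hLR : L ≤ R) (hL : parity S L = parity T L) (hR : parity S R = parity T R)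
    (t : ℕ) :
    parity (swapOn S T L R) t = if t ≤ L ∨ R ≤ t then parity S t else parity T t := by
  have key := countBelow_swapOn (S := S) (T := T) hLR t
  unfold parity at *
  split_ifs with h
  · rcases h with h | h
    · rw [show min L t = t by omega, show min R t = t by omega] at key
      omega
    · rw [show min L t = L by omega, show min R t = R by omega] at key
      omega
  · rw [show min L t = L by omega, show min R t = t by omega] at key
    omega

lemma card_swapOn (hLR : L ≤ R) (hRp : R ≤ p) :
    #(swapOn S T L R) + countBelow S R + countBelow T L
      = #S + countBelow S L + countBelow T R := by
  have key := countBelow_swapOn (S := S) (T := T) hLR p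
  rwa [min_eq_left hRp, min_eq_left (hLR.trans hRp), countBelow_of_le _ le_rfl,
    countBelow_of_le _ le_rfl] at key

namespace IsBlock

variable (hB : IsBlock S T L R)
include hB

lemma parity_swapOn_left (t : ℕ) :
    parity (swapOn S T L R) t = if t ≤ L ∨ R ≤ t then parity S t else parity T t :=
  ThetaBracket.parity_swapOn (by have := hB.two_le; omega) (sub_eq_zero.1 hB.left)
    (sub_eq_zero.1 hB.right) t

lemma parity_swapOn_right (t : ℕ) :
    parity (swapOn T S L R) t = if t ≤ L ∨ R ≤ t then parity T t else parity S t :=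
  ThetaBracket.parity_swapOn (by have := hB.two_le; omega) (sub_eq_zero.1 hB.left).symm
    (sub_eq_zero.1 hB.right).symm t

lemma parityDiff_swapOn (t : ℕ) :
    parityDiff (swapOn S T L R) (swapOn T S L R) t
      = if t ≤ L ∨ R ≤ t then parityDiff S T t else -parityDiff S T t := by
  simp only [parityDiff, hB.parity_swapOn_left, hB.parity_swapOn_right]
  split_ifs <;> ring

lemma paritySum_swapOn (t : ℕ) :
    paritySum (swapOn S T L R) (swapOn T S L R) t = paritySum S T t := by
  simp only [paritySum, hB.parity_swapOn_left, hB.parity_swapOn_right]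
  split_ifs <;> ring

lemma swap : IsBlock (swapOn S T L R) (swapOn T S L R) L R where
  left := by simp [hB.parityDiff_swapOn, hB.left]
  right := by simp [hB.parityDiff_swapOn, hB.right]
  two_le := hB.two_le
  le := hB.le
  inner t hLt htR := by
    rw [hB.parityDiff_swapOn, if_neg (by omega), neg_ne_zero]
    exact hB.inner t hLt htR

lemma edgeTerm_swapOn_left :
    edgeTerm (swapOn S T L R) (swapOn T S L R) L = -edgeTerm S T L := by
  have := hB.two_le
  simp only [edgeTerm, hB.parityDiff_swapOn, hB.paritySum_swapOn, if_pos (Or.inl le_rfl),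
    if_neg (show ¬(L + 1 ≤ L ∨ R ≤ L + 1) by omega), hB.left]
  ring

lemma edgeTerm_swapOn_right :
    edgeTerm (swapOn S T L R) (swapOn T S L R) (R - 1) = -edgeTerm S T (R - 1) := by
  have := hB.two_le
  have hR : R - 1 + 1 = R := by omega
  simp only [edgeTerm, hR, hB.parityDiff_swapOn, hB.paritySum_swapOn, if_pos (Or.inr le_rfl),
    if_neg (show ¬(R - 1 ≤ L ∨ R ≤ R - 1) by omega), hB.right]
  ring

lemma jump_add_jump_swapOn (n : ℕ) :
    jump (swapOn S T L R) n + jump (swapOn T S L R) n = jump S n + jump T n := by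
  have h := hB.paritySum_swapOn n
  have h1 := hB.paritySum_swapOn (n + 1)
  simp only [paritySum] at h h1
  simp only [jump]
  linarith

lemma sum_jump_sq_sub_jump_sq :
    ∑ m ∈ Ico L R, (jump S m ^ 2 - jump T m ^ 2) = edgeTerm S T L - edgeTerm S T (R - 1) := by
  have key : ∀ m, jump S m ^ 2 - jump T m ^ 2 = (parityDiff S T (m + 1) - parityDiff S T m) *
      (paritySum S T (m + 1) - paritySum S T m) := by
    intro m
    simp only [jump, parityDiff, paritySum]
    ring
  have h2 := hB.two_le
  obtain ⟨R, rfl⟩ : ∃ R', R = R' + 1 := ⟨R - 1, by omega⟩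
  have hmid : ∀ m ∈ Ico (L + 1) R, jump S m ^ 2 - jump T m ^ 2 = 0 := by
    intro m hm
    rw [mem_Ico] at hm
    rw [key, paritySum_eq_one (hB.inner m (by omega) (by omega)),
      paritySum_eq_one (hB.inner (m + 1) (by omega) (by omega)), sub_self, mul_zero]
  rw [sum_Ico_succ_top (by omega), sum_eq_sum_Ico_succ_bot (by omega), sum_eq_zero hmid, key, key,
    Nat.add_sub_cancel]
  simp only [edgeTerm, hB.left, hB.right]
  ring

lemma card_swapOn_of_edgeTerm_eq (hbal : edgeTerm S T L = edgeTerm S T (R - 1)) :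
    #(swapOn S T L R) = #S ∧ #(swapOn T S L R) = #T := by
  have hLR : L ≤ R := by have := hB.two_le; omega
  have hsum := hB.sum_jump_sq_sub_jump_sq
  rw [hbal, sub_self, sum_sub_distrib, sum_jump_sq_Ico S hLR, sum_jump_sq_Ico T hLR] at hsum
  have h1 := card_swapOn (S := S) (T := T) hLR hB.le
  have h2 := card_swapOn (S := T) (T := S) hLR hB.le
  constructor <;> omega

end IsBlock

end Swap

section Cancellation

variable {M : Type*} [AddCommGroup M] [IsAddTorsionFree M]

lemma sum_balanced_block_eq_zero (r s L R : ℕ) (w : Finset (Fin p) → Finset (Fin p) → M)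
    (hw : ∀ S T, IsBlock S T L R → w (swapOn S T L R) (swapOn T S L R) = w S T) :
    ∑ S ∈ powersetCard r univ, ∑ T ∈ powersetCard s univ,
      (if IsBlock S T L R ∧ edgeTerm S T L = edgeTerm S T (R - 1)
        then edgeTerm S T L • w S T else 0) = 0 := by
  rw [← sum_product' (f := fun S T => if IsBlock S T L R ∧ edgeTerm S T L = edgeTerm S T (R - 1)
    then edgeTerm S T L • w S T else 0), ← sum_filter]
  set A := (powersetCard r univ ×ˢ powersetCard s univ).filter
    fun q : Finset (Fin p) × Finset (Fin p) =>
      IsBlock q.1 q.2 L R ∧ edgeTerm q.1 q.2 L = edgeTerm q.1 q.2 (R - 1)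
  let swapPair (q : Finset (Fin p) × Finset (Fin p)) := (swapOn q.1 q.2 L R, swapOn q.2 q.1 L R)
  have hA : ∀ q ∈ A, swapPair q ∈ A := by
    rintro ⟨S, T⟩ hq
    simp only [A, mem_filter, mem_product, mem_powersetCard_univ] at hq ⊢
    obtain ⟨⟨hS, hT⟩, hB, hbal⟩ := hq
    obtain ⟨hS', hT'⟩ := hB.card_swapOn_of_edgeTerm_eq hbal
    refine ⟨⟨hS'.trans hS, hT'.trans hT⟩, hB.swap, ?_⟩
    rw [hB.edgeTerm_swapOn_left, hB.edgeTerm_swapOn_right, hbal]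
  have hinv : ∀ q ∈ A, swapPair (swapPair q) = q := fun _ _ =>
    Prod.ext swapOn_swapOn swapOn_swapOn
  have hneg : ∑ q ∈ A, edgeTerm q.1 q.2 L • w q.1 q.2
      = ∑ q ∈ A, -(edgeTerm q.1 q.2 L • w q.1 q.2) := by
    refine sum_nbij' swapPair swapPair hA hA hinv hinv fun q hq => ?_
    have hB := (mem_filter.1 hq).2.1
    simp only [swapPair, hB.edgeTerm_swapOn_left, hw _ _ hB, neg_smul, neg_neg]
  rwa [sum_neg_distrib, self_eq_neg] at hneg

lemma sum_crossSum_smul_eq_zero {r s : ℕ} (hrs : Even r ↔ Even s)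
    (w : Finset (Fin p) → Finset (Fin p) → M)
    (hw : ∀ S T L R, IsBlock S T L R → w (swapOn S T L R) (swapOn T S L R) = w S T) :
    ∑ S ∈ powersetCard r univ, ∑ T ∈ powersetCard s univ, crossSum S T • w S T = 0 := by
  have hp : ∀ S T : Finset (Fin p), #S = r → #T = s → parityDiff S T p = 0 := by
    intro S T hS hT
    simp only [parityDiff, parity_of_le _ le_rfl, hS, hT]
    rw [Nat.even_iff, Nat.even_iff] at hrs
    omega
  have hexpand : ∀ S ∈ powersetCard r univ, ∀ T ∈ powersetCard s univ,
      crossSum S T • w S T = ∑ L ∈ range (p + 1), ∑ R ∈ range (p + 1),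
        (if IsBlock S T L R ∧ edgeTerm S T L = edgeTerm S T (R - 1)
          then edgeTerm S T L • w S T else 0) := by
    intro S hS T hT
    rw [mem_powersetCard_univ] at hS hT
    simp only [crossSum_eq_sum_balanced_blocks (hp S T hS hT), sum_smul, ite_smul, zero_smul]
  rw [sum_congr rfl fun S hS => sum_congr rfl fun T hT => hexpand S hS T hT]
  simp_rw [sum_comm (s := powersetCard s univ) (t := range (p + 1)),
    sum_comm (s := powersetCard r univ) (t := range (p + 1))]
  exact sum_eq_zero fun L _ => sum_eq_zero fun R _ =>
    sum_balanced_block_eq_zero r s L R w (hw · · L R)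

end Cancellation

section Monomials

lemma prod_map_zipIdx_of_pairwise_lt {α M : Type*} [LinearOrder α] [CommMonoid M]
    (G : ℕ → α → M) (l : List α) (hl : l.Pairwise (· < ·)) (n : ℕ) :
    ((l.zipIdx n).map fun ji => G ji.2 ji.1).prod
      = ∏ a ∈ l.toFinset, G (n + #(l.toFinset.filter (· < a))) a := by
  induction l generalizing n with
  | nil => simp
  | cons a l ih =>
    rw [List.pairwise_cons] at hl
    have ha : a ∉ l.toFinset := fun h => lt_irrefl a (hl.1 a (List.mem_toFinset.1 h))
    rw [List.zipIdx_cons, List.map_cons, List.prod_cons, ih hl.2, List.toFinset_cons,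
      prod_insert ha, filter_insert, if_neg (lt_irrefl a),
      filter_false_of_mem fun b hb => not_lt.2 (hl.1 b (List.mem_toFinset.1 hb)).le]
    congr 1
    refine prod_congr rfl fun b hb => ?_
    rw [filter_insert, if_pos (hl.1 b (List.mem_toFinset.1 hb)),
      card_insert_of_notMem fun h => ha (mem_filter.1 h).1]
    ring_nf

variable (ε : ℕ) (S : Finset (Fin p)) (x : Fin p → ℝ)

/-- The summand of `Θ` indexed by `S`: its `j`-th smallest element `i` has `j = countBelow S i`
and exponent `(-1) ^ (j + 1 + ε) = (-1) ^ (ε + 1) * jump S i`. -/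
noncomputable def thetaMonomial : ℝ := ∏ i, x i ^ ((-1) ^ (ε + 1) * jump S i)

lemma prod_sort_eq_thetaMonomial :
    (((S.sort (· ≤ ·)).zipIdx).map fun ji => x ji.1 ^ ((-1 : ℤ) ^ (ji.2 + 1 + ε))).prod
      = thetaMonomial ε S x := by
  rw [prod_map_zipIdx_of_pairwise_lt (fun k i => x i ^ ((-1 : ℤ) ^ (k + 1 + ε))) _
    (Finset.sortedLT_sort S).pairwise, Finset.sort_toFinset, thetaMonomial]
  rw [← prod_subset (subset_univ S) (f := fun i => x i ^ ((-1) ^ (ε + 1) * jump S i))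
    fun i _ hi => by simp [jump_eq, hi]]
  refine prod_congr rfl fun i hi => ?_
  rw [jump_eq, if_pos hi, zero_add, countBelow, ← pow_add]
  congr 2
  simp only [Fin.lt_def]
  omega

end Monomials

section Derivatives

variable {ι : Type*} [Fintype ι] [DecidableEq ι]

lemma hasFDerivAt_prod_zpow (n : ι → ℤ) {x : ι → ℝ} (hx : ∀ i, x i ≠ 0) :
    HasFDerivAt (fun y : ι → ℝ => ∏ i, y i ^ n i)
      (∑ i, (∏ j ∈ univ.erase i, x j ^ n j) •
        ((n i * x i ^ (n i - 1)) • ContinuousLinearMap.proj (R := ℝ) (φ := fun _ => ℝ) i))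
      x :=
  HasFDerivAt.finsetProd fun i _ =>
    (hasDerivAt_zpow (n i) (x i) (.inl (hx i))).comp_hasFDerivAt (f := fun y : ι → ℝ => y i)
      x (hasFDerivAt_apply i x)

lemma mul_fderiv_prod_zpow_single (n : ι → ℤ) {x : ι → ℝ} (hx : ∀ i, x i ≠ 0)
    (k : ι) :
    x k * fderiv ℝ (fun y : ι → ℝ => ∏ i, y i ^ n i) x (Pi.single k 1)
      = n k * ∏ i, x i ^ n i := by
  rw [(hasFDerivAt_prod_zpow n hx).fderiv, _root_.sum_apply,
    sum_eq_single k (fun i _ hik => by simp [Pi.single_eq_of_ne hik]) (by simp),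
    ← mul_prod_erase univ _ (mem_univ k)]
  have := hx k
  simp [zpow_sub_one₀ this]
  field_simp

lemma Theta_natCast (ε r : ℕ) :
    Theta p ε r = fun x => ∑ S ∈ powersetCard r univ, thetaMonomial ε S x := by
  funext x
  rw [Theta, if_pos (Int.natCast_nonneg r), Int.toNat_natCast]
  exact sum_congr rfl fun S _ => prod_sort_eq_thetaMonomial ε S x

lemma Theta_of_neg (ε : ℕ) {r : ℤ} (hr : r < 0) : Theta p ε r = 0 := by
  funext x
  simp [Theta, hr.not_ge]

lemma mul_fderiv_Theta_single (ε r : ℕ) {x : Fin p → ℝ} (hx : ∀ i, x i ≠ 0) (k : Fin p) :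
    x k * fderiv ℝ (Theta p ε r) x (Pi.single k 1)
      = (-1) ^ (ε + 1) * ∑ S ∈ powersetCard r univ, jump S k * thetaMonomial ε S x := by
  rw [Theta_natCast, fderiv_fun_sum (A := thetaMonomial ε) fun S _ =>
      (hasFDerivAt_prod_zpow _ hx).differentiableAt,
    _root_.sum_apply, mul_sum, mul_sum]
  refine sum_congr rfl fun S _ => ?_
  unfold thetaMonomial
  rw [mul_fderiv_prod_zpow_single _ hx k]
  push_cast
  ring

end Derivatives

section Bracket

lemma pbSG_eq_of_mul_fderiv {g h : (Fin p → ℝ) → ℝ} {x a b : Fin p → ℝ}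
    (hg : ∀ k, x k * fderiv ℝ g x (Pi.single k 1) = a k)
    (hh : ∀ k, x k * fderiv ℝ h x (Pi.single k 1) = b k) :
    pbSG p g h x = ∑ i, ∑ j, if i < j then a i * b j - a j * b i else 0 := by
  refine sum_congr rfl fun i _ => sum_congr rfl fun j _ => ?_
  split_ifs
  · rw [← hg, ← hg, ← hh, ← hh]
    ring
  · rfl

lemma IsBlock.thetaMonomial_swapOn_mul {S T : Finset (Fin p)} {L R : ℕ} (hB : IsBlock S T L R)
    (ε : ℕ) {x : Fin p → ℝ} (hx : ∀ i, x i ≠ 0) :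
    thetaMonomial ε (swapOn S T L R) x * thetaMonomial ε (swapOn T S L R) x
      = thetaMonomial ε S x * thetaMonomial ε T x := by
  simp only [thetaMonomial, ← prod_mul_distrib, ← zpow_add₀ (hx _), ← mul_add,
    hB.jump_add_jump_swapOn]

lemma pbSG_Theta_natCast (ε r s : ℕ) {x : Fin p → ℝ} (hx : ∀ i, x i ≠ 0) :
    pbSG p (Theta p ε r) (Theta p ε s) x =
      ∑ S ∈ powersetCard r univ, ∑ T ∈ powersetCard s univ,
        crossSum S T • (thetaMonomial ε S x * thetaMonomial ε T x) := by
  rw [pbSG_eq_of_mul_fderiv (mul_fderiv_Theta_single ε r hx) (mul_fderiv_Theta_single ε s hx)]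
  have he : (-1 : ℝ) ^ (ε + 1) * (-1) ^ (ε + 1) = 1 := by
    rw [← pow_add, Even.neg_one_pow ⟨ε + 1, rfl⟩]
  simp only [crossSum, sum_smul, mul_mul_mul_comm ((-1 : ℝ) ^ (ε + 1)), he, one_mul]
  simp_rw [sum_comm (s := powersetCard s univ) (t := (univ : Finset (Fin p))),
    sum_comm (s := powersetCard r univ) (t := (univ : Finset (Fin p)))]
  refine sum_congr rfl fun i _ => sum_congr rfl fun j _ => ?_
  split_ifs
  · rw [sum_mul_sum, sum_mul_sum, ← sum_sub_distrib]
    refine sum_congr rfl fun S _ => ?_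
    rw [← sum_sub_distrib]
    refine sum_congr rfl fun T _ => ?_
    rw [zsmul_eq_mul]
    push_cast
    ring
  · simp

end Bracket

end ThetaBracket

/-- `{Θ^{1,p}_{r,ε}, Θ^{1,p}_{s,ε}}_f = 0` whenever `r` and `s` are both even or both odd. -/
theorem theta_bracket_same_parity_zero (p ε : ℕ) (r s : ℤ) (hpar : Even r ↔ Even s)
    (x : Fin p → ℝ) (hx : ∀ i, x i ≠ 0) :
    pbSG p (Theta p ε r) (Theta p ε s) x = 0 := by
  rcases lt_or_ge r 0 with hr | hr
  · simp [pbSG, ThetaBracket.Theta_of_neg ε hr]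
  rcases lt_or_ge s 0 with hs | hs
  · simp [pbSG, ThetaBracket.Theta_of_neg ε hs]
  lift r to ℕ using hr
  lift s to ℕ using hs
  rw [Int.even_coe_nat, Int.even_coe_nat] at hpar
  rw [ThetaBracket.pbSG_Theta_natCast ε r s hx]
  exact ThetaBracket.sum_crossSum_smul_eq_zero hpar _
    fun S T L R hB => hB.thetaMonomial_swapOn_mul ε hx
end

section
/- For any differentiable function g of f_1, ..., f_p and F = (f_1 f_3 ··· f_{p−1})/(f_2 f_4 ··· f_p) (p even), one has {F^{±1}, g}_f = ± F^{±1} E_f g, where E_f = Σ_i f_i ∂/∂f_i. In particular {F^{±1}, Θ^{1,p}_{r,ε}}_f = 0 for r even, and = ∓(−1)^ε F^{±1} Θ^{1,p}_{r,ε} for r odd. -/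
/-- `F = (f_1 f_3 ⋯ f_{p−1})/(f_2 f_4 ⋯ f_p)` for `p = 2n` even (here `y i` is `f_{i+1}`). -/
noncomputable def Fratio (n : ℕ) (y : Fin (2 * n) → ℝ) : ℝ :=
  (∏ i ∈ Finset.univ.filter (fun i : Fin (2 * n) => (i : ℕ) % 2 = 0), y i) /
    (∏ i ∈ Finset.univ.filter (fun i : Fin (2 * n) => (i : ℕ) % 2 = 1), y i)

open Filter Topology Finset

theorem fderiv_apply_eq_of_eventually_scaling {E : Type*} [NormedAddCommGroup E]
    [NormedSpace ℝ E] {h : E → ℝ} {x v : E} {d : ℤ} (hh : DifferentiableAt ℝ h x)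
    (hscale : ∀ᶠ t in 𝓝 (1 : ℝ), h (x + (t - 1) • v) = t ^ d * h x) :
    fderiv ℝ h x v = d * h x := by
  have hline : HasDerivAt (fun t : ℝ => x + (t - 1) • v) v 1 := by
    simpa using (((hasDerivAt_id (1 : ℝ)).sub_const 1).smul_const v).const_add x
  have hcomp := hh.hasFDerivAt.comp_hasDerivAt_of_eq 1 hline (by simp)
  have hpow : HasDerivAt (fun t : ℝ => t ^ d * h x) (d * h x) 1 := by
    simpa using (hasDerivAt_zpow d (1 : ℝ) (Or.inl one_ne_zero)).mul_const (h x)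
  exact hcomp.unique (hpow.congr_of_eventuallyEq hscale)

theorem fderiv_apply_self_of_homogeneous {E : Type*} [NormedAddCommGroup E]
    [NormedSpace ℝ E] {h : E → ℝ} {x : E} {d : ℤ} (hh : DifferentiableAt ℝ h x)
    (hhom : ∀ t : ℝ, t ≠ 0 → h (t • x) = t ^ d * h x) :
    fderiv ℝ h x x = d * h x := by
  refine fderiv_apply_eq_of_eventually_scaling hh ?_
  filter_upwards [eventually_ne_nhds one_ne_zero] with t ht
  rw [← hhom t ht]
  congr 1
  module

@[fun_prop]
theorem DifferentiableAt.list_prod_map {ι E : Type*} [NormedAddCommGroup E] [NormedSpace ℝ E]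
    {l : List ι} {f : ι → E → ℝ} {x : E} (h : ∀ i ∈ l, DifferentiableAt ℝ (f i) x) :
    DifferentiableAt ℝ (fun y => (l.map (f · y)).prod) x :=
  (HasFDerivAt.list_prod' fun i hi => (h i hi).hasFDerivAt).differentiableAt

theorem prod_update_mul_self {ι M : Type*} [DecidableEq ι] [CommMonoid M] (s : Finset ι)
    (x : ι → M) (i : ι) (t : M) :
    ∏ j ∈ s, Function.update x i (t * x i) j = (if i ∈ s then t else 1) * ∏ j ∈ s, x j := by
  split_ifs with hi
  · rw [prod_update_of_mem hi, prod_eq_mul_prod_sdiff_singleton_of_mem hi x, mul_assoc]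
  · rw [prod_update_of_notMem hi, one_mul]

section Coordinates

variable {ι : Type*} [Fintype ι] [DecidableEq ι]

noncomputable def eulerOp (g : (ι → ℝ) → ℝ) (x : ι → ℝ) : ℝ :=
  ∑ i, x i * fderiv ℝ g x (Pi.single i 1)

theorem eulerOp_eq_fderiv_apply_self (g : (ι → ℝ) → ℝ) (x : ι → ℝ) :
    eulerOp g x = fderiv ℝ g x x := by
  rw [congrArg (fderiv ℝ g x) (pi_eq_sum_univ' x)]
  simp [eulerOp, map_sum]

theorem mul_fderiv_apply_single_of_scaling {h : (ι → ℝ) → ℝ} {x : ι → ℝ} {i : ι} {d : ℤ}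
    (hh : DifferentiableAt ℝ h x)
    (hscale : ∀ t : ℝ, h (Function.update x i (t * x i)) = t ^ d * h x) :
    x i * fderiv ℝ h x (Pi.single i 1) = d * h x := by
  have hsingle : Pi.single i (x i) = x i • (Pi.single i 1 : ι → ℝ) := by
    rw [← Pi.single_smul, smul_eq_mul, mul_one]
  rw [← smul_eq_mul, ← map_smul, ← hsingle]
  refine fderiv_apply_eq_of_eventually_scaling hh (Eventually.of_forall fun t => ?_)
  rw [← hscale t]
  congr 1
  ext j
  rcases eq_or_ne j i with rfl | hj <;> simp [Function.update_of_ne, *]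
  ring

end Coordinates

theorem List.prod_map_mul_zpow {α K : Type*} [Field K] {t : K} (ht : t ≠ 0)
    (l : List α) (f : α → K) (e : α → ℤ) :
    (l.map fun a => (t * f a) ^ e a).prod = t ^ (l.map e).sum * (l.map fun a => f a ^ e a).prod := by
  induction l with
  | nil => simp
  | cons a l ih =>
    simp only [List.map_cons, List.prod_cons, List.sum_cons]
    rw [ih, mul_zpow, zpow_add₀ ht]
    ring

theorem List.sum_map_snd_zipIdx {α M : Type*} [AddCommMonoid M] (l : List α) (f : ℕ → M) :
    (l.zipIdx.map fun a => f a.2).sum = ∑ k ∈ Finset.range l.length, f k := by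
  rw [show (l.zipIdx.map fun a => f a.2) = (l.zipIdx.map Prod.snd).map f by rw [List.map_map]; rfl,
    List.zipIdx_map_snd, ← List.range_eq_range']
  rfl

theorem sum_sum_ite_lt_sub {ι R : Type*} [Fintype ι] [LinearOrder ι] [CommRing R]
    (a u : ι → R) :
    ∑ i, ∑ j, (if i < j then a i * u j - a j * u i else 0) =
      ∑ k, (∑ i, (if i < k then a i else 0) - ∑ j, (if k < j then a j else 0)) * u k := by
  have hsplit : ∀ i j, (if i < j then a i * u j - a j * u i else 0) =
      (if i < j then a i else 0) * u j - (if i < j then a j else 0) * u i := by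
    intro i j; split_ifs <;> simp
  simp only [hsplit, sum_sub_distrib, sub_mul, sum_mul]
  rw [sum_comm (f := fun i j => (if i < j then a i else 0) * u j)]

theorem Fin.sum_ite_val_lt_neg_one_pow {R : Type*} [Ring R] {m c : ℕ} (hc : c ≤ m) :
    ∑ i : Fin m, (if (i : ℕ) < c then (-1 : R) ^ (i : ℕ) else 0) = if Even c then 0 else 1 := by
  rw [Fin.sum_univ_eq_sum_range (fun i => if i < c then (-1 : R) ^ i else 0), ← sum_filter,
    ← neg_one_geom_sum]
  congr 1
  ext i
  simp only [mem_filter, mem_range]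
  omega

theorem Fin.sum_ite_lt_neg_one_pow_sub_sum_ite_gt {R : Type*} [Ring R] {n : ℕ} (k : Fin (2 * n)) :
    ∑ i : Fin (2 * n), (if i < k then (-1 : R) ^ (i : ℕ) else 0) -
      ∑ j : Fin (2 * n), (if k < j then (-1 : R) ^ (j : ℕ) else 0) = 1 := by
  have hgt : ∀ j : Fin (2 * n), (if (k : ℕ) < j then (-1 : R) ^ (j : ℕ) else 0) =
      (-1 : R) ^ (j : ℕ) - if (j : ℕ) < k + 1 then (-1 : R) ^ (j : ℕ) else 0 := by
    intro j; split_ifs <;> first | omega | simp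
  simp only [Fin.lt_def, hgt, sum_sub_distrib, Fin.sum_neg_one_pow,
    Fin.sum_ite_val_lt_neg_one_pow k.isLt.le, Fin.sum_ite_val_lt_neg_one_pow k.isLt]
  rcases Nat.even_or_odd (k : ℕ) with hk | hk <;> simp [hk, Nat.even_add_one]

theorem pbSG_eq_mul_eulerOp {n : ℕ} {h : (Fin (2 * n) → ℝ) → ℝ} {x : Fin (2 * n) → ℝ} {c : ℝ}
    (hh : ∀ i, x i * fderiv ℝ h x (Pi.single i 1) = c * (-1) ^ (i : ℕ) * h x)
    (g : (Fin (2 * n) → ℝ) → ℝ) :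
    pbSG (2 * n) h g x = c * h x * eulerOp g x := by
  set u : Fin (2 * n) → ℝ := fun k => x k * fderiv ℝ g x (Pi.single k 1)
  have hterm : ∀ i j : Fin (2 * n), (if i < j then x i * x j *
      (fderiv ℝ h x (Pi.single i 1) * fderiv ℝ g x (Pi.single j 1) -
        fderiv ℝ h x (Pi.single j 1) * fderiv ℝ g x (Pi.single i 1)) else 0) =
      c * h x * (if i < j then (-1) ^ (i : ℕ) * u j - (-1) ^ (j : ℕ) * u i else 0) := by
    intro i j
    split_ifs
    · linear_combination u j * hh i - u i * hh j
    · simp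
  simp only [pbSG, hterm, ← mul_sum, sum_sum_ite_lt_sub, Fin.sum_ite_lt_neg_one_pow_sub_sum_ite_gt,
    one_mul]
  rfl

theorem Fratio_update_mul_self (n : ℕ) (x : Fin (2 * n) → ℝ) (i : Fin (2 * n)) (t : ℝ) :
    Fratio n (Function.update x i (t * x i)) = t ^ ((-1 : ℤ) ^ (i : ℕ)) * Fratio n x := by
  simp only [Fratio, prod_update_mul_self, mem_filter, mem_univ, true_and]
  rcases Nat.mod_two_eq_zero_or_one i with hi | hi
  · simp [hi, (Nat.even_iff.2 hi).neg_one_pow, mul_div_assoc]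
  · simp [hi, (Nat.odd_iff.2 hi).neg_one_pow, div_eq_mul_inv]
    ring

theorem mul_fderiv_Fratio_single {n : ℕ} {x : Fin (2 * n) → ℝ} (hx : ∀ i, x i ≠ 0)
    (i : Fin (2 * n)) :
    x i * fderiv ℝ (Fratio n) x (Pi.single i 1) = (-1) ^ (i : ℕ) * Fratio n x := by
  have hdiff : DifferentiableAt ℝ (Fratio n) x := by
    unfold Fratio
    fun_prop (disch := simp [hx, prod_ne_zero_iff])
  rw [mul_fderiv_apply_single_of_scaling hdiff (Fratio_update_mul_self n x i)]
  push_cast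
  ring

theorem mul_fderiv_inv_Fratio_single {n : ℕ} {x : Fin (2 * n) → ℝ} (hx : ∀ i, x i ≠ 0)
    (i : Fin (2 * n)) :
    x i * fderiv ℝ (fun y => (Fratio n y)⁻¹) x (Pi.single i 1) =
      -(-1) ^ (i : ℕ) * (Fratio n x)⁻¹ := by
  have hdiff : DifferentiableAt ℝ (fun y => (Fratio n y)⁻¹) x := by
    unfold Fratio
    fun_prop (disch := simp [hx, prod_ne_zero_iff])
  have hscale (t : ℝ) : (Fratio n (Function.update x i (t * x i)))⁻¹ =
      t ^ (-(-1 : ℤ) ^ (i : ℕ)) * (Fratio n x)⁻¹ := by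
    rw [Fratio_update_mul_self, mul_inv, zpow_neg]
  rw [mul_fderiv_apply_single_of_scaling hdiff hscale]
  push_cast
  ring

theorem differentiableAt_Theta {p : ℕ} (ε : ℕ) (r : ℤ) {x : Fin p → ℝ} (hx : ∀ i, x i ≠ 0) :
    DifferentiableAt ℝ (Theta p ε r) x := by
  unfold Theta
  split_ifs
  · fun_prop (disch := simp [hx])
  · fun_prop

theorem Theta_smul (p ε : ℕ) (r : ℤ) (x : Fin p → ℝ) {t : ℝ} (ht : t ≠ 0) :
    Theta p ε r (t • x) = t ^ (∑ k ∈ range r.toNat, (-1 : ℤ) ^ (k + 1 + ε)) * Theta p ε r x := by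
  unfold Theta
  split_ifs
  · rw [mul_sum]
    refine sum_congr rfl fun s hs => ?_
    simp only [Pi.smul_apply, smul_eq_mul]
    rw [List.prod_map_mul_zpow ht, List.sum_map_snd_zipIdx (f := fun k => (-1 : ℤ) ^ (k + 1 + ε)),
      length_sort, (mem_powersetCard.1 hs).2]
  · simp

theorem eulerOp_Theta {p : ℕ} (ε : ℕ) (r : ℤ) {x : Fin p → ℝ} (hx : ∀ i, x i ≠ 0) :
    eulerOp (Theta p ε r) x = -(-1) ^ ε * (if Even r.toNat then 0 else 1) * Theta p ε r x := by
  have hdeg : ∑ k ∈ range r.toNat, (-1 : ℤ) ^ (k + 1 + ε) =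
      -(-1) ^ ε * if Even r.toNat then 0 else 1 := by
    rw [← neg_one_geom_sum, mul_sum]
    exact sum_congr rfl fun k _ => by ring
  rw [eulerOp_eq_fderiv_apply_self, fderiv_apply_self_of_homogeneous (differentiableAt_Theta ε r hx)
    fun t ht => Theta_smul p ε r x ht, hdeg]
  push_cast
  ring

theorem eulerOp_Theta_of_even {p : ℕ} (ε : ℕ) {r : ℤ} (hr : Even r) {x : Fin p → ℝ}
    (hx : ∀ i, x i ≠ 0) : eulerOp (Theta p ε r) x = 0 := by
  have : Even r.toNat := by
    rw [Int.even_iff] at hr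
    rw [Nat.even_iff]
    omega
  simp [eulerOp_Theta ε r hx, this]

theorem eulerOp_Theta_of_odd {p : ℕ} (ε : ℕ) {r : ℤ} (hr : Odd r) {x : Fin p → ℝ}
    (hx : ∀ i, x i ≠ 0) : eulerOp (Theta p ε r) x = -(-1) ^ ε * Theta p ε r x := by
  rcases le_or_gt 0 r with hr0 | hr0
  · have : ¬Even r.toNat := by
      rw [Int.odd_iff] at hr
      rw [Nat.not_even_iff_odd, Nat.odd_iff]
      omega
    simp [eulerOp_Theta ε r hx, this]
  · simp [eulerOp_Theta ε r hx, Theta, hr0.not_ge]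

theorem bracket_with_F_general (n : ℕ) (x : Fin (2 * n) → ℝ) (hx : ∀ i, x i ≠ 0)
    (g : (Fin (2 * n) → ℝ) → ℝ) :
    (pbSG (2 * n) (Fratio n) g x =
        Fratio n x * ∑ i, x i * fderiv ℝ g x (Pi.single i 1)) ∧
    (pbSG (2 * n) (fun y => (Fratio n y)⁻¹) g x =
        -(Fratio n x)⁻¹ * ∑ i, x i * fderiv ℝ g x (Pi.single i 1)) ∧
    (∀ (r : ℤ) (ε : ℕ), Even r →
      pbSG (2 * n) (Fratio n) (Theta (2 * n) ε r) x = 0 ∧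
      pbSG (2 * n) (fun y => (Fratio n y)⁻¹) (Theta (2 * n) ε r) x = 0) ∧
    (∀ (r : ℤ) (ε : ℕ), Odd r →
      pbSG (2 * n) (Fratio n) (Theta (2 * n) ε r) x =
        -((-1 : ℝ) ^ ε) * Fratio n x * Theta (2 * n) ε r x ∧
      pbSG (2 * n) (fun y => (Fratio n y)⁻¹) (Theta (2 * n) ε r) x =
        (-1 : ℝ) ^ ε * (Fratio n x)⁻¹ * Theta (2 * n) ε r x) := by
  have hF := pbSG_eq_mul_eulerOp (c := 1) fun i => by rw [mul_fderiv_Fratio_single hx, one_mul]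
  have hFinv := pbSG_eq_mul_eulerOp (c := -1) fun i => by
    rw [mul_fderiv_inv_Fratio_single hx, neg_one_mul]
  refine ⟨?_, ?_, fun r ε hr => ?_, fun r ε hr => ?_⟩
  · rw [hF, one_mul, eulerOp]
  · rw [hFinv, neg_one_mul, eulerOp]
  · simp [hF, hFinv, eulerOp_Theta_of_even ε hr hx]
  · rw [hF, hFinv, eulerOp_Theta_of_odd ε hr hx]
    constructor <;> ring

/-- `{F^{±1}, g}_f = ± F^{±1} E_f g` where `E_f = Σ_i f_i ∂/∂f_i`; in particular
`{F^{±1}, Θ^{1,p}_{r,ε}}_f = 0` for `r` even and `= ∓(−1)^ε F^{±1} Θ^{1,p}_{r,ε}` for `r` odd. -/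
theorem bracket_with_F (n : ℕ) (x : Fin (2 * n) → ℝ) (hx : ∀ i, x i ≠ 0)
    (g : (Fin (2 * n) → ℝ) → ℝ) (hg : DifferentiableAt ℝ g x) :
    (pbSG (2 * n) (Fratio n) g x =
        Fratio n x * ∑ i, x i * fderiv ℝ g x (Pi.single i 1)) ∧
    (pbSG (2 * n) (fun y => (Fratio n y)⁻¹) g x =
        -(Fratio n x)⁻¹ * ∑ i, x i * fderiv ℝ g x (Pi.single i 1)) ∧
    (∀ (r : ℤ) (ε : ℕ), Even r →
      pbSG (2 * n) (Fratio n) (Theta (2 * n) ε r) x = 0 ∧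
      pbSG (2 * n) (fun y => (Fratio n y)⁻¹) (Theta (2 * n) ε r) x = 0) ∧
    (∀ (r : ℤ) (ε : ℕ), Odd r →
      pbSG (2 * n) (Fratio n) (Theta (2 * n) ε r) x =
        -((-1 : ℝ) ^ ε) * Fratio n x * Theta (2 * n) ε r x ∧
      pbSG (2 * n) (fun y => (Fratio n y)⁻¹) (Theta (2 * n) ε r) x =
        (-1 : ℝ) ^ ε * (Fratio n x)⁻¹ * Theta (2 * n) ε r x) :=
  bracket_with_F_general n x hx g
end

section
/- The map G_p : (v_1, ..., v_p) ↦ (v_1 v_2, v_2 v_3, ..., v_{p−1} v_p) is a Poisson map from the bracket {g,h}_v = (1/2) ∇_v g · Ω^{s̃g}_p · (∇_v h)^T to the bracket {g,h}_f = Σ_{i<j} f_i f_j (∂g/∂f_i ∂h/∂f_j − ∂g/∂f_j ∂h/∂f_i); i.e., for differentiable g, h on ℝ^{p−1}, {g∘G_p, h∘G_p}_v = {g,h}_f evaluated at f = G_p(v). Equivalently, dG_p · Ω^{s̃g}_p · (dG_p)^T = 2 Ω^{sG}_{p−1}|_{f=G_p(v)}. -/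
/-!
Everything reduces to the chain rule in matrix form: pulling the bracket of `Ω` back along a map
with Jacobian `J` gives the bracket of `J Ω Jᵀ`. Writing `Ω^{s̃g}_{kl} = s(k,l) v_k v_l`, where
`s(k,l) ∈ {1, -1, 0}` records whether `l - k` is odd and of which sign, the `(i,j)` entry of
`dG · Ω^{s̃g} · dGᵀ` is `v_i v_{i+1} v_j v_{j+1}` times the sum of `s` over the corners of the unit
square at `(i,j)`. For `i < j` exactly two corners have odd difference, both with the same sign, so
the sum is `2 sign (j - i)`.
-/

open Matrix

/-- Poisson-type bracket associated with a matrix `Ω`: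
`{g,h} = ∇g · Ω · (∇h)ᵀ = Σ_{i,j} Ω_{ij} ∂g/∂x_i ∂h/∂x_j`. -/
noncomputable def gradBracket {m : ℕ} (Ω : Matrix (Fin m) (Fin m) ℝ)
    (g h : (Fin m → ℝ) → ℝ) (x : Fin m → ℝ) : ℝ :=
  ∑ i, ∑ j, Ω i j * fderiv ℝ g x (Pi.single i 1) * fderiv ℝ h x (Pi.single j 1)

/-- `G_p : (v_1, …, v_p) ↦ (v_1 v_2, …, v_{p−1} v_p)` (here with `p` replaced by `p+1`). -/
def Gmap (p : ℕ) (v : Fin (p + 1) → ℝ) (i : Fin p) : ℝ := v i.castSucc * v i.succ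

/-- `Ω^{s̃g}_p`: antisymmetric, `(i,j)`-entry `v_i v_j` for `j > i` with `j − i` odd, `0` for
`j − i` even. -/
def OmegaSGtilde (p : ℕ) (v : Fin p → ℝ) : Matrix (Fin p) (Fin p) ℝ := fun i j =>
  if (i : ℕ) < j ∧ Odd ((j : ℕ) - i) then v i * v j
  else if (j : ℕ) < i ∧ Odd ((i : ℕ) - j) then -(v i * v j)
  else 0

/-- `Ω^{sG}_p`: antisymmetric, `(i,j)`-entry `f_i f_j` for `j > i`. -/
def OmegaSG (p : ℕ) (f : Fin p → ℝ) : Matrix (Fin p) (Fin p) ℝ := fun i j =>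
  if i < j then f i * f j else if j < i then -(f i * f j) else 0

/-- The Jacobian matrix of `G_p`. -/
def dGmap (p : ℕ) (v : Fin (p + 1) → ℝ) : Matrix (Fin p) (Fin (p + 1)) ℝ := fun i j =>
  if j = i.castSucc then v i.succ else if j = i.succ then v i.castSucc else 0

theorem ContinuousLinearMap.apply_eq_dotProduct_single {R ι : Type*} [CommSemiring R]
    [TopologicalSpace R] [Fintype ι] [DecidableEq ι] (φ : (ι → R) →L[R] R) (y : ι → R) :
    φ y = (fun i => φ (Pi.single i 1)) ⬝ᵥ y := by
  conv_lhs => rw [← Finset.univ_sum_single y]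
  simp only [map_sum, dotProduct]
  refine Finset.sum_congr rfl fun i _ => ?_
  rw [show Pi.single i (y i) = y i • Pi.single i (1 : R) by
    rw [← Pi.single_smul', smul_eq_mul, mul_one], map_smul, smul_eq_mul, mul_comm]

section GradBracket

variable {n m : ℕ}

noncomputable def coordGrad (g : (Fin m → ℝ) → ℝ) (x : Fin m → ℝ) : Fin m → ℝ :=
  fun i => fderiv ℝ g x (Pi.single i 1)

theorem gradBracket_eq_dotProduct (Ω : Matrix (Fin m) (Fin m) ℝ) (g h : (Fin m → ℝ) → ℝ)
    (x : Fin m → ℝ) : gradBracket Ω g h x = coordGrad g x ⬝ᵥ Ω *ᵥ coordGrad h x := by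
  simp only [gradBracket, coordGrad, dotProduct, mulVec, Finset.mul_sum]
  exact Finset.sum_congr rfl fun i _ => Finset.sum_congr rfl fun j _ => by ring

theorem gradBracket_smul (c : ℝ) (Ω : Matrix (Fin m) (Fin m) ℝ) (g h : (Fin m → ℝ) → ℝ)
    (x : Fin m → ℝ) : gradBracket (c • Ω) g h x = c * gradBracket Ω g h x := by
  simp only [gradBracket_eq_dotProduct, smul_mulVec, dotProduct_smul, smul_eq_mul]

theorem coordGrad_comp {F : (Fin n → ℝ) → Fin m → ℝ} {L : (Fin n → ℝ) →L[ℝ] Fin m → ℝ}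
    {v : Fin n → ℝ} (hF : HasFDerivAt F L v) {g : (Fin m → ℝ) → ℝ}
    (hg : DifferentiableAt ℝ g (F v)) :
    coordGrad (fun w => g (F w)) v =
      coordGrad g (F v) ᵥ* LinearMap.toMatrix' (L : (Fin n → ℝ) →ₗ[ℝ] Fin m → ℝ) := by
  ext k
  change fderiv ℝ (g ∘ F) v _ = _
  rw [(hg.hasFDerivAt.comp v hF).fderiv, ContinuousLinearMap.comp_apply,
    ContinuousLinearMap.apply_eq_dotProduct_single]
  rfl

theorem gradBracket_comp (Ω : Matrix (Fin n) (Fin n) ℝ) {F : (Fin n → ℝ) → Fin m → ℝ}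
    {L : (Fin n → ℝ) →L[ℝ] Fin m → ℝ} {v : Fin n → ℝ} (hF : HasFDerivAt F L v)
    {g h : (Fin m → ℝ) → ℝ} (hg : DifferentiableAt ℝ g (F v))
    (hh : DifferentiableAt ℝ h (F v)) :
    gradBracket Ω (fun w => g (F w)) (fun w => h (F w)) v =
      gradBracket (LinearMap.toMatrix' (L : (Fin n → ℝ) →ₗ[ℝ] Fin m → ℝ) * Ω *
        (LinearMap.toMatrix' (L : (Fin n → ℝ) →ₗ[ℝ] Fin m → ℝ))ᵀ) g h (F v) := by
  rw [gradBracket_eq_dotProduct, gradBracket_eq_dotProduct, coordGrad_comp hF hg,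
    coordGrad_comp hF hh]
  set J := LinearMap.toMatrix' (L : (Fin n → ℝ) →ₗ[ℝ] Fin m → ℝ)
  rw [← mulVec_transpose J (coordGrad h (F v)), mulVec_mulVec, dotProduct_mulVec,
    dotProduct_mulVec, vecMul_vecMul, Matrix.mul_assoc]

end GradBracket

def oddSign (a b : ℕ) : ℤ :=
  if a < b ∧ Odd (b - a) then 1 else if b < a ∧ Odd (a - b) then -1 else 0

theorem oddSign_add_oddSign_add_oddSign_add_oddSign (a b : ℕ) :
    oddSign a b + oddSign a (b + 1) + oddSign (a + 1) b + oddSign (a + 1) (b + 1) =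
      2 * Int.sign ((b : ℤ) - a) := by
  rcases lt_trichotomy a b with hab | rfl | hab
  · rw [Int.sign_eq_one_of_pos (by omega)]
    simp only [oddSign, Nat.odd_iff]
    split_ifs <;> omega
  · simp only [oddSign, Nat.odd_iff]
    split_ifs <;> simp_all
  · rw [Int.sign_eq_neg_one_of_neg (by omega)]
    simp only [oddSign, Nat.odd_iff]
    split_ifs <;> omega

theorem OmegaSGtilde_apply (p : ℕ) (v : Fin p → ℝ) (k l : Fin p) :
    OmegaSGtilde p v k l = oddSign k l * (v k * v l) := by
  simp only [OmegaSGtilde, oddSign]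
  split_ifs <;> simp

theorem OmegaSG_apply (p : ℕ) (f : Fin p → ℝ) (i j : Fin p) :
    OmegaSG p f i j = Int.sign ((j : ℤ) - i) * (f i * f j) := by
  rcases lt_trichotomy i j with hij | rfl | hij
  · rw [Int.sign_eq_one_of_pos (by omega)]
    simp [OmegaSG, hij]
  · simp [OmegaSG]
  · rw [Int.sign_eq_neg_one_of_neg (by omega)]
    simp [OmegaSG, hij, hij.asymm]

section Gmap

variable (p : ℕ) (v : Fin (p + 1) → ℝ)

theorem dGmap_row (i : Fin p) :
    dGmap p v i = Pi.single i.castSucc (v i.succ) + Pi.single i.succ (v i.castSucc) := by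
  ext k
  have hne := (Fin.castSucc_lt_succ (i := i)).ne
  simp only [dGmap, Pi.add_apply, Pi.single_apply]
  split_ifs <;> simp_all

theorem dGmap_mulVec_apply (w : Fin (p + 1) → ℝ) (i : Fin p) :
    (dGmap p v *ᵥ w) i = v i.succ * w i.castSucc + v i.castSucc * w i.succ := by
  rw [mulVec, dGmap_row, add_dotProduct, single_dotProduct, single_dotProduct]

theorem dGmap_mul_apply {ι : Type*} (A : Matrix (Fin (p + 1)) ι ℝ) (i : Fin p) (l : ι) :
    (dGmap p v * A) i l = v i.succ * A i.castSucc l + v i.castSucc * A i.succ l := by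
  rw [mul_apply', dGmap_row, add_dotProduct, single_dotProduct, single_dotProduct]

theorem mul_dGmap_transpose_apply {ι : Type*} (A : Matrix ι (Fin (p + 1)) ℝ) (k : ι)
    (j : Fin p) :
    (A * (dGmap p v)ᵀ) k j = A k j.castSucc * v j.succ + A k j.succ * v j.castSucc := by
  rw [mul_apply', show (fun l => (dGmap p v)ᵀ l j) = dGmap p v j from rfl, dGmap_row,
    dotProduct_add, dotProduct_single, dotProduct_single]

theorem dGmap_mul_OmegaSGtilde_mul_transpose :
    dGmap p v * OmegaSGtilde (p + 1) v * (dGmap p v)ᵀ = (2 : ℝ) • OmegaSG p (Gmap p v) := by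
  ext i j
  rw [mul_dGmap_transpose_apply, dGmap_mul_apply, dGmap_mul_apply, Matrix.smul_apply,
    OmegaSG_apply]
  simp only [OmegaSGtilde_apply, Gmap, Fin.val_castSucc, Fin.val_succ, smul_eq_mul]
  have h := congrArg (Int.cast : ℤ → ℝ) (oddSign_add_oddSign_add_oddSign_add_oddSign i j)
  push_cast at h
  linear_combination (v i.castSucc * v i.succ * v j.castSucc * v j.succ) * h

theorem hasFDerivAt_Gmap :
    HasFDerivAt (Gmap p) (Matrix.toLin' (dGmap p v)).toContinuousLinearMap v := by
  rw [hasFDerivAt_pi']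
  intro i
  have hi : HasFDerivAt (fun w : Fin (p + 1) → ℝ => w i.castSucc * w i.succ) _ v :=
    (hasFDerivAt_apply (𝕜 := ℝ) i.castSucc v).mul (hasFDerivAt_apply i.succ v)
  refine hi.congr_fderiv ?_
  ext w
  simp only [ContinuousLinearMap.comp_apply, ContinuousLinearMap.proj_apply,
    LinearMap.coe_toContinuousLinearMap', toLin'_apply, dGmap_mulVec_apply, _root_.add_apply,
    _root_.smul_apply, smul_eq_mul]
  ring

end Gmap

/-- `G_p` is a Poisson map from `{g,h}_v = (1/2)∇g·Ω^{s̃g}_p·(∇h)ᵀ` to the sine-Gordon bracket: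
`dG_p · Ω^{s̃g}_p · (dG_p)ᵀ = 2 Ω^{sG}_{p−1}|_{f=G_p(v)}` and
`{g∘G_p, h∘G_p}_v = {g,h}_f` at `f = G_p(v)`. -/
theorem Gmap_poisson (p : ℕ) (v : Fin (p + 1) → ℝ) (g h : (Fin p → ℝ) → ℝ)
    (hg : DifferentiableAt ℝ g (Gmap p v)) (hh : DifferentiableAt ℝ h (Gmap p v)) :
    dGmap p v * OmegaSGtilde (p + 1) v * (dGmap p v)ᵀ = (2 : ℝ) • OmegaSG p (Gmap p v) ∧
    (1 / 2 : ℝ) * gradBracket (OmegaSGtilde (p + 1) v)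
        (fun w => g (Gmap p w)) (fun w => h (Gmap p w)) v =
      gradBracket (OmegaSG p (Gmap p v)) g h (Gmap p v) := by
  have hΩ := dGmap_mul_OmegaSGtilde_mul_transpose p v
  refine ⟨hΩ, ?_⟩
  rw [gradBracket_comp _ (hasFDerivAt_Gmap p v) hg hh, LinearMap.coe_toContinuousLinearMap,
    LinearMap.toMatrix'_toLin', hΩ, gradBracket_smul]
  ring
end

section
/- The pKdV multi-sum satisfies the recurrence Ψ^{a,b+1}_r = c_{b+2} Ψ^{a,b}_r + Ψ^{a,b−1}_{r−1}, and consequently ∂Ψ^{a,b+1}_r/∂c_{b+2} = Ψ^{a,b}_r. -/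
/-!
Split the admissible index sets in `[a, b+1]` according to whether they contain `b+1`.
Those that do not are exactly the admissible sets in `[a, b]`; those that do are `{b+1} ∪ t`
with `t` admissible in `[a, b-1]`, and their extra factor `f_{b+1} = (c_{b+1} c_{b+2})⁻¹`
cancels the last two factors of `Π_{i=a}^{b+2} c_i`. Since neither `Ψ^{a,b}` nor `Ψ^{a,b-1}`
involves `c_{b+2}`, the recurrence exhibits `Ψ^{a,b+1}_r` as an affine function of `c_{b+2}`.
-/

/-- The pKdV multi-sum
`Ψ^{a,b}_r = (Σ_{a ≤ i₁, i_j+1 < i_{j+1}, i_r ≤ b} Π_j f_{i_j}) · Π_{i=a}^{b+1} c_i`,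
where `f_i = 1/(c_i c_{i+1})` and the sum ranges over `r` indices in `[a,b]`, pairwise at
distance `≥ 2`.  For `r = 0` this is `Π_{i=a}^{b+1} c_i`, and `Ψ = 0` for `r < 0`. -/
noncomputable def Psi (c : ℤ → ℝ) (a b : ℤ) (r : ℤ) : ℝ :=
  if 0 ≤ r then
    (∑ s ∈ ((Finset.Icc a b).powersetCard r.toNat).filter
        (fun s => ∀ i ∈ s, ∀ j ∈ s, i < j → i + 2 ≤ j),
      ∏ i ∈ s, (c i * c (i + 1))⁻¹) * ∏ i ∈ Finset.Icc a (b + 1), c i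
  else 0

open Finset

lemma prod_Icc_add_one_right {M : Type*} [CommMonoid M] (f : ℤ → M) {a b : ℤ}
    (h : a ≤ b + 1) :
    ∏ i ∈ Icc a (b + 1), f i = (∏ i ∈ Icc a b, f i) * f (b + 1) := by
  rw [← insert_Icc_right_eq_Icc_add_one h, prod_insert (by simp), mul_comm]

noncomputable def sparseSubsets (a b : ℤ) (k : ℕ) : Finset (Finset ℤ) :=
  ((Icc a b).powersetCard k).filter fun s => ∀ i ∈ s, ∀ j ∈ s, i < j → i + 2 ≤ j

lemma mem_sparseSubsets {a b : ℤ} {k : ℕ} {s : Finset ℤ} :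
    s ∈ sparseSubsets a b k ↔
      s ⊆ Icc a b ∧ s.card = k ∧ ∀ i ∈ s, ∀ j ∈ s, i < j → i + 2 ≤ j := by
  simp [sparseSubsets, mem_powersetCard, and_assoc]

lemma filter_notMem_sparseSubsets_add_one (a b : ℤ) (k : ℕ) :
    (sparseSubsets a (b + 1) k).filter (b + 1 ∉ ·) = sparseSubsets a b k := by
  ext s
  simp only [mem_filter, mem_sparseSubsets]
  grind

lemma sum_filter_mem_sparseSubsets_add_one {R : Type*} [CommSemiring R] (g : ℤ → R)
    {a b : ℤ} (hab : a ≤ b + 1) (k : ℕ) :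
    ∑ s ∈ (sparseSubsets a (b + 1) (k + 1)).filter (b + 1 ∈ ·), ∏ i ∈ s, g i =
      g (b + 1) * ∑ t ∈ sparseSubsets a (b - 1) k, ∏ i ∈ t, g i := by
  rw [mul_sum]
  refine sum_nbij' (·.erase (b + 1)) (insert (b + 1)) ?_ ?_ ?_ ?_ ?_
  · intro s hs
    obtain ⟨hs, hb⟩ := mem_filter.1 hs
    obtain ⟨hsub, hcard, hgap⟩ := mem_sparseSubsets.1 hs
    refine mem_sparseSubsets.2 ⟨fun x hx => ?_, by simp [card_erase_of_mem hb, hcard],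
      fun i hi j hj => hgap i (mem_of_mem_erase hi) j (mem_of_mem_erase hj)⟩
    obtain ⟨hxb, hx⟩ := mem_erase.1 hx
    have := hgap x hx _ hb (by grind)
    grind
  · intro t ht
    obtain ⟨hsub, hcard, hgap⟩ := mem_sparseSubsets.1 ht
    have hb : b + 1 ∉ t := fun hb => by grind
    refine mem_filter.2 ⟨mem_sparseSubsets.2 ⟨?_, by rw [card_insert_of_notMem hb, hcard], ?_⟩,
      mem_insert_self _ _⟩
    · grind [insert_subset_iff]
    · grind
  · intro s hs
    exact insert_erase (mem_filter.1 hs).2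
  · intro t ht
    exact erase_insert fun hb => by grind [mem_sparseSubsets]
  · intro s hs
    exact (mul_prod_erase s g (mem_filter.1 hs).2).symm

lemma sum_sparseSubsets_add_one {R : Type*} [CommSemiring R] (g : ℤ → R)
    {a b : ℤ} (hab : a ≤ b + 1) (k : ℕ) :
    ∑ s ∈ sparseSubsets a (b + 1) (k + 1), ∏ i ∈ s, g i =
      ∑ s ∈ sparseSubsets a b (k + 1), ∏ i ∈ s, g i +
        g (b + 1) * ∑ t ∈ sparseSubsets a (b - 1) k, ∏ i ∈ t, g i := by
  rw [← sum_filter_not_add_sum_filter _ (b + 1 ∈ ·), filter_notMem_sparseSubsets_add_one,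
    sum_filter_mem_sparseSubsets_add_one g hab]

lemma Psi_natCast (c : ℤ → ℝ) (a b : ℤ) (k : ℕ) :
    Psi c a b k =
      (∑ s ∈ sparseSubsets a b k, ∏ i ∈ s, (c i * c (i + 1))⁻¹) * ∏ i ∈ Icc a (b + 1), c i := by
  simp [Psi, sparseSubsets]

lemma Psi_zero (c : ℤ → ℝ) (a b : ℤ) : Psi c a b 0 = ∏ i ∈ Icc a (b + 1), c i := by
  simp [Psi, filter_singleton]

lemma Psi_of_neg (c : ℤ → ℝ) (a b : ℤ) {r : ℤ} (hr : r < 0) : Psi c a b r = 0 :=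
  if_neg hr.not_ge

lemma Psi_congr {c c' : ℤ → ℝ} {a b : ℤ} (h : ∀ i ∈ Icc a (b + 1), c i = c' i) (r : ℤ) :
    Psi c a b r = Psi c' a b r := by
  rcases lt_or_ge r 0 with hr | hr
  · rw [Psi_of_neg _ _ _ hr, Psi_of_neg _ _ _ hr]
  obtain ⟨k, rfl⟩ := Int.eq_ofNat_of_zero_le hr
  rw [Psi_natCast, Psi_natCast, prod_congr rfl h]
  congr 1
  refine sum_congr rfl fun s hs => prod_congr rfl fun i hi => ?_
  have := mem_Icc.1 ((mem_sparseSubsets.1 hs).1 hi)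
  rw [h i (by grind), h (i + 1) (by grind)]

theorem Psi_add_one_right {c : ℤ → ℝ} {a b : ℤ} (hab : a ≤ b + 1) (hb₁ : c (b + 1) ≠ 0)
    (hb₂ : c (b + 2) ≠ 0) (r : ℤ) :
    Psi c a (b + 1) r = c (b + 2) * Psi c a b r + Psi c a (b - 1) (r - 1) := by
  have hprod₂ : ∏ i ∈ Icc a (b + 1 + 1), c i = (∏ i ∈ Icc a (b + 1), c i) * c (b + 2) := by
    rw [prod_Icc_add_one_right c (b := b + 1) (by omega), show b + 1 + 1 = b + 2 by ring]
  rcases lt_or_ge r 0 with hr | hr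
  · simp [Psi_of_neg, hr, show r - 1 < 0 by omega]
  obtain ⟨k, rfl⟩ := Int.eq_ofNat_of_zero_le hr
  rcases k with _ | k
  · rw [Nat.cast_zero, Psi_zero, Psi_zero, Psi_of_neg _ _ _ (by omega), hprod₂]
    ring
  · have hk : ((k + 1 : ℕ) : ℤ) - 1 = k := by omega
    rw [hk, Psi_natCast, Psi_natCast, Psi_natCast, sum_sparseSubsets_add_one _ hab, hprod₂,
      prod_Icc_add_one_right c hab, show b - 1 + 1 = b by ring, show b + 1 + 1 = b + 2 by ring]
    field_simp

theorem hasDerivAt_Psi_update {c : ℤ → ℝ} {a b : ℤ} (hab : a ≤ b + 1) (hb₁ : c (b + 1) ≠ 0)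
    (hb₂ : c (b + 2) ≠ 0) (r : ℤ) :
    HasDerivAt (fun t => Psi (Function.update c (b + 2) t) a (b + 1) r) (Psi c a b r)
      (c (b + 2)) := by
  have haffine : HasDerivAt (fun t => t * Psi c a b r + Psi c a (b - 1) (r - 1))
      (Psi c a b r) (c (b + 2)) := by
    simpa using ((hasDerivAt_id (c (b + 2))).mul_const (Psi c a b r)).add_const
      (Psi c a (b - 1) (r - 1))
  refine haffine.congr_of_eventuallyEq ?_
  filter_upwards [eventually_ne_nhds hb₂] with t ht
  have hc (i : ℤ) (hi : i < b + 2) : Function.update c (b + 2) t i = c i :=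
    Function.update_of_ne hi.ne _ _
  rw [Psi_add_one_right hab (by rwa [hc _ (by omega)]) (by simpa) r, Function.update_self,
    Psi_congr (fun i hi => hc i (by grind)), Psi_congr (fun i hi => hc i (by grind))]

/-- The recurrence `Ψ^{a,b+1}_r = c_{b+2} Ψ^{a,b}_r + Ψ^{a,b−1}_{r−1}`, and consequently
`∂Ψ^{a,b+1}_r/∂c_{b+2} = Ψ^{a,b}_r`. -/
theorem psi_recurrence (c : ℤ → ℝ) (hc : ∀ i, c i ≠ 0) (a b : ℤ) (hab : a ≤ b) (r : ℤ) :
    Psi c a (b + 1) r = c (b + 2) * Psi c a b r + Psi c a (b - 1) (r - 1) ∧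
    deriv (fun t => Psi (Function.update c (b + 2) t) a (b + 1) r) (c (b + 2)) =
      Psi c a b r :=
  ⟨Psi_add_one_right (by omega) (hc _) (hc _) r,
    (hasDerivAt_Psi_update (by omega) (hc _) (hc _) r).deriv⟩
end

section
/- With respect to the tridiagonal constant Poisson bracket {g,h}_c = Σ_{i=1}^{2n−1} (∂g/∂c_i ∂h/∂c_{i+1} − ∂g/∂c_{i+1} ∂h/∂c_i), the pKdV multi-sums satisfy {Ψ^{1,p}_r, Ψ^{1,p}_s}_c = 0 for all 0 ≤ r, s ≤ ⌊(p+1)/2⌋, where p ≤ 2n−2. -/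
/-- The partial derivative `∂g/∂c_i` of a function of the variables `c : ℤ → ℝ`. -/
noncomputable def pdC (g : (ℤ → ℝ) → ℝ) (i : ℤ) (c : ℤ → ℝ) : ℝ :=
  deriv (fun t => g (Function.update c i t)) (c i)

/-- The tridiagonal constant Poisson bracket on the variables `c_1, …, c_{2n}`:
`{g,h}_c = Σ_{i=1}^{2n−1} (∂g/∂c_i ∂h/∂c_{i+1} − ∂g/∂c_{i+1} ∂h/∂c_i)`. -/
noncomputable def cBracket (n : ℕ) (g h : (ℤ → ℝ) → ℝ) (c : ℤ → ℝ) : ℝ :=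
  ∑ i ∈ Finset.Icc (1 : ℤ) (2 * n - 1),
    (pdC g i c * pdC h (i + 1) c - pdC g (i + 1) c * pdC h i c)

/-!
Write `Ψ^{a,b}_r` as a sum over the `r`-matchings `{j, j + 1}`, `j ∈ s`, of the path
`a, …, b + 1`; each summand is the product of the `c_j` at the uncovered vertices, so
`∂Ψ/∂c_i` is the same sum over matchings leaving `i` uncovered. In terms of generating
functions, `K_l(a, b) = ∑_r l^r Ψ^{a,b}_r` is the continuant of `c_a, …, c_{b+1}`, satisfying
`K_l(a, b) = K_l(a, k - 1) K_l(k + 1, b) + l K_l(a, k - 2) K_l(k + 2, b)`, and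
`∑_r l^r ∂Ψ^{1,p}_r/∂c_i = K_l(1, i - 2) K_l(i + 1, p)`.
For `l ≠ l'` the bracket of these two gradients telescopes: `(l' - l)` times its partial sum
up to `m` is the product of a Casoratian of the left continuants and one of the right
continuants at `m`, and the latter vanishes at `m = p`. Comparing the coefficients of
`l^r l'^s` in the bilinear bracket then gives `{Ψ_r, Ψ_s} = 0`.
-/

open Finset Function

theorem prod_Icc_eq_prod_Icc_mul_prod_Icc {M : Type*} [CommMonoid M] (f : ℤ → M) {a m b : ℤ}
    (ham : a ≤ m + 1) (hmb : m ≤ b) :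
    ∏ j ∈ Icc a b, f j = (∏ j ∈ Icc a m, f j) * ∏ j ∈ Icc (m + 1) b, f j := by
  rw [← prod_union (disjoint_left.2 fun x hx hx' => by rw [mem_Icc] at hx hx'; omega)]
  congr 1
  ext x
  simp only [mem_Icc, mem_union]
  omega

theorem sum_range_pow_mul_sum_powersetCard {α : Type*} {S : Finset α} {N : ℕ} (hN : #S ≤ N)
    (P : Finset α → Prop) [DecidablePred P] (l : ℝ) (F : Finset α → ℝ) :
    ∑ r ∈ range (N + 1), l ^ r * ∑ s ∈ (S.powersetCard r).filter P, F s
      = ∑ s ∈ S.powerset.filter P, l ^ #s * F s := by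
  rw [← sum_fiberwise_of_maps_to (g := card) (t := range (N + 1)) fun s hs =>
    mem_range.2 (Nat.lt_succ_of_le ((card_le_card (mem_powerset.1 (mem_filter.1 hs).1)).trans hN))]
  refine sum_congr rfl fun r _ => ?_
  rw [mul_sum, powersetCard_eq_filter, filter_comm]
  exact sum_congr rfl fun s hs => by rw [(mem_filter.1 hs).2]

theorem hasDerivAt_inv_prod_mul_prod_update {ι : Type*} [DecidableEq ι] {C T : Finset ι}
    (hCT : C ⊆ T) (c : ι → ℝ) {i : ι} (hci : c i ≠ 0) :
    HasDerivAt (fun t => (∏ j ∈ C, update c i t j)⁻¹ * ∏ j ∈ T, update c i t j)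
      (if i ∈ T \ C then (∏ j ∈ C, c j)⁻¹ * ∏ j ∈ T.erase i, c j else 0) (c i) := by
  by_cases hiC : i ∈ C
  · -- for `t ≠ 0` the factor `t` cancels between the two products
    rw [if_neg (fun h => (mem_sdiff.1 h).2 hiC)]
    refine (hasDerivAt_const (c i) ((∏ j ∈ C.erase i, c j)⁻¹ * ∏ j ∈ T.erase i, c j))
      |>.congr_of_eventuallyEq ?_
    filter_upwards [eventually_ne_nhds hci] with t ht
    simp only [prod_update_of_mem hiC, prod_update_of_mem (hCT hiC), sdiff_singleton_eq_erase]
    field_simp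
  by_cases hiT : i ∈ T
  · rw [if_pos (mem_sdiff.2 ⟨hiT, hiC⟩)]
    simp only [prod_update_of_notMem hiC, prod_update_of_mem hiT, sdiff_singleton_eq_erase]
    simpa using ((hasDerivAt_id (c i)).mul_const (∏ j ∈ T.erase i, c j)).const_mul
      (∏ j ∈ C, c j)⁻¹
  · rw [if_neg (fun h => hiT (mem_sdiff.1 h).1)]
    simp only [prod_update_of_notMem hiC, prod_update_of_notMem hiT]
    exact hasDerivAt_const _ _

theorem eq_zero_of_forall_sum_pow_mul_eq_zero {N : ℕ} {K : ℕ → ℝ}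
    (h : ∀ x : ℝ, ∑ k ∈ range (N + 1), x ^ k * K k = 0) {k : ℕ} (hk : k ≤ N) : K k = 0 := by
  have hq : ∑ j ∈ range (N + 1), Polynomial.C (K j) * Polynomial.X ^ j = 0 :=
    Polynomial.funext fun x => by
      simp only [Polynomial.eval_finsetSum, Polynomial.eval_mul, Polynomial.eval_C,
        Polynomial.eval_pow, Polynomial.eval_X, Polynomial.eval_zero, ← h x]
      exact sum_congr rfl fun _ _ => mul_comm _ _
  simpa [Polynomial.finsetSum_coeff, Polynomial.coeff_C_mul_X_pow, Nat.lt_succ_of_le hk]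
    using congrArg (Polynomial.coeff · k) hq

def Spaced (s : Finset ℤ) : Prop := ∀ i ∈ s, ∀ j ∈ s, i < j → i + 2 ≤ j

instance : DecidablePred Spaced := fun s =>
  inferInstanceAs (Decidable (∀ i ∈ s, ∀ j ∈ s, i < j → i + 2 ≤ j))

theorem Spaced.mono {s t : Finset ℤ} (hs : Spaced s) (hts : t ⊆ s) : Spaced t :=
  fun i hi j hj => hs i (hts hi) j (hts hj)

theorem Spaced.union {s t : Finset ℤ} (hs : Spaced s) (ht : Spaced t)
    (hst : ∀ i ∈ s, ∀ j ∈ t, i + 2 ≤ j) : Spaced (s ∪ t) := by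
  intro i hi j hj hij
  rcases mem_union.1 hi with hi | hi <;> rcases mem_union.1 hj with hj | hj
  · exact hs i hi j hj hij
  · exact hst i hi j hj
  · linarith [hst j hj i hi]
  · exact ht i hi j hj hij

theorem Spaced.insert {s : Finset ℤ} {k : ℤ} (hs : Spaced s)
    (hk : ∀ x ∈ s, x + 2 ≤ k ∨ k + 2 ≤ x) : Spaced (insert k s) := by
  intro i hi j hj hij
  rcases mem_insert.1 hi with hik | hi <;> rcases mem_insert.1 hj with hjk | hj
  · omega
  · have := hk j hj; omega
  · have := hk i hi; omega
  · exact hs i hi j hj hij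

/-- The vertices of the path `ℤ` covered by the matching `{{j, j + 1} | j ∈ s}`. -/
def cover (s : Finset ℤ) : Finset ℤ := s ∪ s.image (· + 1)

theorem mem_cover {s : Finset ℤ} {x : ℤ} : x ∈ cover s ↔ x ∈ s ∨ x - 1 ∈ s := by
  simp [cover, ← sub_eq_add_neg]

theorem notMem_cover_iff {s : Finset ℤ} {i : ℤ} : i ∉ cover s ↔ Disjoint s (Icc (i - 1) i) := by
  rw [mem_cover, disjoint_left]
  constructor
  · intro h x hx hx'
    rw [mem_Icc] at hx'
    rcases (by omega : x = i - 1 ∨ x = i) with rfl | rfl <;> tauto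
  · intro h hi
    rcases hi with hi | hi <;> exact h hi (by rw [mem_Icc]; omega)

theorem cover_subset_Icc {s : Finset ℤ} {a b : ℤ} (hs : s ⊆ Icc a b) : cover s ⊆ Icc a (b + 1) := by
  intro x hx
  rcases mem_cover.1 hx with h | h <;> have := mem_Icc.1 (hs h) <;> rw [mem_Icc] <;> omega

theorem Spaced.prod_cover {M : Type*} [CommMonoid M] {s : Finset ℤ} (hs : Spaced s) (g : ℤ → M) :
    ∏ j ∈ cover s, g j = ∏ j ∈ s, g j * g (j + 1) := by
  have hdisj : Disjoint s (s.image (· + 1)) := by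
    rw [disjoint_left]
    rintro x hx hx'
    obtain ⟨y, hy, rfl⟩ := mem_image.1 hx'
    linarith [hs y hy _ hx (lt_add_one y)]
  rw [cover, prod_union hdisj, prod_image (fun x _ y _ h => add_right_cancel h), prod_mul_distrib]

theorem filter_union_filter_of_disjoint_Icc {s : Finset ℤ} {m n : ℤ} (hs : Disjoint s (Icc m n)) :
    s.filter (· < m) ∪ s.filter (n < ·) = s := by
  rw [← filter_or, filter_true_of_mem]
  intro x hx
  have := disjoint_left.1 hs hx
  rw [mem_Icc] at this
  omega

theorem Psi_natCast_eq_sum (c : ℤ → ℝ) (a b : ℤ) (r : ℕ) :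
    Psi c a b r = ∑ s ∈ ((Icc a b).powersetCard r).filter Spaced,
      (∏ j ∈ cover s, c j)⁻¹ * ∏ j ∈ Icc a (b + 1), c j := by
  rw [Psi, if_pos (Int.natCast_nonneg r), Int.toNat_natCast, sum_mul]
  refine sum_congr rfl fun s hs => ?_
  rw [(mem_filter.1 hs).2.prod_cover, prod_inv_distrib]

theorem pdC_Psi_natCast (c : ℤ → ℝ) (a b : ℤ) (r : ℕ) {i : ℤ} (hci : c i ≠ 0) :
    pdC (fun c => Psi c a b r) i c = ∑ s ∈ ((Icc a b).powersetCard r).filter Spaced,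
      if i ∈ Icc a (b + 1) \ cover s then
        (∏ j ∈ cover s, c j)⁻¹ * ∏ j ∈ (Icc a (b + 1)).erase i, c j else 0 := by
  refine HasDerivAt.deriv ?_
  simp only [Psi_natCast_eq_sum]
  refine HasDerivAt.fun_sum fun s hs => hasDerivAt_inv_prod_mul_prod_update ?_ c hci
  exact cover_subset_Icc (mem_powersetCard.1 (mem_filter.1 hs).1).1

theorem pdC_Psi_natCast_of_lt {c : ℤ → ℝ} {a b i : ℤ} (hbi : b + 1 < i) (hci : c i ≠ 0) (r : ℕ) :
    pdC (fun c => Psi c a b r) i c = 0 := by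
  rw [pdC_Psi_natCast c a b r hci]
  exact sum_eq_zero fun s _ => if_neg fun h => by have := mem_Icc.1 (mem_sdiff.1 h).1; omega

noncomputable section Continuant

variable (c : ℤ → ℝ) (l : ℝ)

def spacedSets (a b : ℤ) : Finset (Finset ℤ) := (Icc a b).powerset.filter Spaced

def spacedWeight (s : Finset ℤ) : ℝ := l ^ #s * ∏ j ∈ s, (c j * c (j + 1))⁻¹

def spacedSum (a b : ℤ) : ℝ := ∑ s ∈ spacedSets a b, spacedWeight c l s

/-- `∑ᵣ lʳ Ψ^{a,b}_r`, the continuant of `c_a, …, c_{b+1}` with off-diagonal parameter `l`. -/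
def continuant (a b : ℤ) : ℝ := spacedSum c l a b * ∏ j ∈ Icc a (b + 1), c j

variable {c l}

theorem mem_spacedSets {a b : ℤ} {s : Finset ℤ} :
    s ∈ spacedSets a b ↔ (∀ x ∈ s, a ≤ x ∧ x ≤ b) ∧ Spaced s := by
  simp [spacedSets, subset_iff]

theorem spacedWeight_union {s t : Finset ℤ} (h : Disjoint s t) :
    spacedWeight c l (s ∪ t) = spacedWeight c l s * spacedWeight c l t := by
  simp only [spacedWeight, card_union_of_disjoint h, prod_union h, pow_add]
  ring

theorem spacedSum_of_lt {a b : ℤ} (h : b < a) : spacedSum c l a b = 1 := by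
  rw [spacedSum, spacedSets, Icc_eq_empty_of_lt h, powerset_empty, filter_singleton,
    if_pos (by simp [Spaced])]
  simp [spacedWeight]

theorem sum_spacedSets_disjoint_Icc {a b m n : ℤ} (hmn : m ≤ n) (ha : a ≤ n + 1)
    (hb : m ≤ b + 1) :
    ∑ s ∈ (spacedSets a b).filter (fun s => Disjoint s (Icc m n)), spacedWeight c l s
      = spacedSum c l a (m - 1) * spacedSum c l (n + 1) b := by
  rw [spacedSum, spacedSum, sum_mul_sum, ← sum_product']
  refine sum_nbij' (fun s => (s.filter (· < m), s.filter (n < ·))) (fun p => p.1 ∪ p.2)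
    ?_ ?_ ?_ ?_ ?_
  · intro s hs
    simp only [mem_filter, mem_product, mem_spacedSets] at hs ⊢
    obtain ⟨⟨hsub, hsp⟩, -⟩ := hs
    refine ⟨⟨fun x hx => ?_, hsp.mono (filter_subset _ _)⟩,
      ⟨fun x hx => ?_, hsp.mono (filter_subset _ _)⟩⟩ <;>
    · have := hsub x hx.1
      omega
  · rintro ⟨L, R⟩ hp
    simp only [mem_filter, mem_product, mem_spacedSets] at hp ⊢
    obtain ⟨⟨hL, hLs⟩, ⟨hR, hRs⟩⟩ := hp
    refine ⟨⟨fun x hx => ?_, hLs.union hRs fun x hx y hy => ?_⟩, disjoint_left.2 fun x hx => ?_⟩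
    · rcases mem_union.1 hx with hx | hx
      · have := hL x hx; omega
      · have := hR x hx; omega
    · have := hL x hx; have := hR y hy; omega
    · rw [mem_Icc]
      rcases mem_union.1 hx with hx | hx
      · have := hL x hx; omega
      · have := hR x hx; omega
  · intro s hs
    exact filter_union_filter_of_disjoint_Icc (mem_filter.1 hs).2
  · rintro ⟨L, R⟩ hp
    simp only [mem_product, mem_spacedSets] at hp
    obtain ⟨⟨hL, -⟩, ⟨hR, -⟩⟩ := hp
    simp only [filter_union, Prod.mk.injEq]
    constructor
    · rw [filter_true_of_mem fun x hx => by have := hL x hx; omega,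
        filter_false_of_mem fun x hx => by have := hR x hx; omega, union_empty]
    · rw [filter_false_of_mem fun x hx => by have := hL x hx; omega,
        filter_true_of_mem fun x hx => by have := hR x hx; omega, empty_union]
  · intro s hs
    rw [← spacedWeight_union (disjoint_filter.2 fun x _ h h' => by omega),
      filter_union_filter_of_disjoint_Icc (mem_filter.1 hs).2]

theorem spacedWeight_insert {s : Finset ℤ} {k : ℤ} (hk : k ∉ s) :
    spacedWeight c l (insert k s) = l * (c k * c (k + 1))⁻¹ * spacedWeight c l s := by
  simp only [spacedWeight, card_insert_of_notMem hk, prod_insert hk, pow_succ]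
  ring

theorem sum_spacedSets_mem {a b k : ℤ} (hak : a ≤ k) (hkb : k ≤ b) :
    ∑ s ∈ (spacedSets a b).filter (k ∈ ·), spacedWeight c l s
      = l * (c k * c (k + 1))⁻¹ *
        ∑ s ∈ (spacedSets a b).filter (fun s => Disjoint s (Icc (k - 1) (k + 1))),
          spacedWeight c l s := by
  rw [mul_sum]
  refine sum_nbij' (fun s => s.erase k) (fun t => insert k t) ?_ ?_ ?_ ?_ ?_
  · intro s hs
    simp only [mem_filter, mem_spacedSets] at hs ⊢
    obtain ⟨⟨hsub, hsp⟩, hks⟩ := hs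
    refine ⟨⟨fun x hx => hsub x (mem_of_mem_erase hx), hsp.mono (erase_subset _ _)⟩,
      disjoint_left.2 fun x hx hx' => ?_⟩
    obtain ⟨hxk, hx⟩ := mem_erase.1 hx
    rw [mem_Icc] at hx'
    rcases lt_or_gt_of_ne hxk with h | h
    · have := hsp x hx k hks h; omega
    · have := hsp k hks x hx h; omega
  · intro t ht
    simp only [mem_filter, mem_spacedSets] at ht ⊢
    obtain ⟨⟨hsub, hsp⟩, hdisj⟩ := ht
    have hfar : ∀ x ∈ t, x + 2 ≤ k ∨ k + 2 ≤ x := fun x hx => by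
      have := disjoint_left.1 hdisj hx
      rw [mem_Icc] at this
      omega
    refine ⟨⟨fun x hx => ?_, ?_⟩, mem_insert_self k t⟩
    · rcases mem_insert.1 hx with rfl | hx
      · omega
      · exact hsub x hx
    · exact hsp.insert hfar
  · intro s hs
    exact insert_erase (mem_filter.1 hs).2
  · intro t ht
    refine erase_insert fun hk => disjoint_left.1 (mem_filter.1 ht).2 hk ?_
    rw [mem_Icc]
    omega
  · intro s hs
    conv_lhs => rw [← insert_erase (mem_filter.1 hs).2]
    exact spacedWeight_insert (notMem_erase k s)

theorem spacedSum_pivot {a b k : ℤ} (hak : a ≤ k) (hkb : k ≤ b) :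
    spacedSum c l a b = spacedSum c l a (k - 1) * spacedSum c l (k + 1) b
      + l * (c k * c (k + 1))⁻¹ * (spacedSum c l a (k - 2) * spacedSum c l (k + 2) b) := by
  have hnot : (spacedSets a b).filter (k ∉ ·)
      = (spacedSets a b).filter (fun s => Disjoint s (Icc k k)) :=
    filter_congr fun s _ => by rw [Icc_self, disjoint_singleton_right]
  rw [spacedSum, ← sum_filter_not_add_sum_filter _ (k ∈ ·), hnot, sum_spacedSets_mem hak hkb,
    sum_spacedSets_disjoint_Icc le_rfl (by omega) (by omega),
    sum_spacedSets_disjoint_Icc (by omega) (by omega) (by omega)]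
  ring_nf

theorem continuant_pivot {a b k : ℤ} (hak : a ≤ k) (hkb : k ≤ b) (hk : c k ≠ 0)
    (hk' : c (k + 1) ≠ 0) :
    continuant c l a b = continuant c l a (k - 1) * continuant c l (k + 1) b
      + l * (continuant c l a (k - 2) * continuant c l (k + 2) b) := by
  have hL : ∏ j ∈ Icc a k, c j = (∏ j ∈ Icc a (k - 1), c j) * c k := by
    rw [prod_Icc_eq_prod_Icc_mul_prod_Icc c (m := k - 1) (by omega) (by omega), sub_add_cancel,
      Icc_self, prod_singleton]
  have hR : ∏ j ∈ Icc (k + 1) (b + 1), c j = c (k + 1) * ∏ j ∈ Icc (k + 2) (b + 1), c j := by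
    rw [prod_Icc_eq_prod_Icc_mul_prod_Icc c (a := k + 1) (m := k + 1)
      (b := b + 1) (by omega) (by omega), Icc_self,
      prod_singleton, add_assoc, one_add_one_eq_two]
  simp only [continuant, spacedSum_pivot hak hkb,
    prod_Icc_eq_prod_Icc_mul_prod_Icc c (m := k) (a := a) (b := b + 1) (by omega) (by omega),
    hL, hR, sub_add_cancel, show k - 2 + 1 = k - 1 by ring]
  field_simp

theorem continuant_of_add_two_eq {a b : ℤ} (h : b + 2 = a) : continuant c l a b = 1 := by
  rw [continuant, spacedSum_of_lt (by omega), Icc_eq_empty_of_lt (by omega), prod_empty, mul_one]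

theorem continuant_of_add_one_eq {a b : ℤ} (h : b + 1 = a) : continuant c l a b = c a := by
  rw [continuant, spacedSum_of_lt (by omega), h, Icc_self, prod_singleton, one_mul]

theorem continuant_expand_right {a b : ℤ} (hab : a ≤ b) (hb : c b ≠ 0) (hb' : c (b + 1) ≠ 0) :
    continuant c l a b = c (b + 1) * continuant c l a (b - 1) + l * continuant c l a (b - 2) := by
  rw [continuant_pivot hab le_rfl hb hb', continuant_of_add_one_eq rfl,
    continuant_of_add_two_eq rfl]
  ring

theorem continuant_expand_left {a b : ℤ} (hab : a ≤ b) (ha : c a ≠ 0) (ha' : c (a + 1) ≠ 0) :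
    continuant c l a b = c a * continuant c l (a + 1) b + l * continuant c l (a + 2) b := by
  rw [continuant_pivot le_rfl hab ha ha', continuant_of_add_one_eq (b := a - 1) (by ring),
    continuant_of_add_two_eq (b := a - 2) (by ring)]
  ring

end Continuant

theorem sum_pow_mul_pdC_Psi {c : ℤ → ℝ} {a b i : ℤ} (hai : a ≤ i) (hib : i ≤ b + 1)
    (hci : c i ≠ 0) (l : ℝ) {N : ℕ} (hN : #(Icc a b) ≤ N) :
    ∑ r ∈ range (N + 1), l ^ r * pdC (fun c => Psi c a b r) i c
      = continuant c l a (i - 2) * continuant c l (i + 1) b := by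
  have hi : i ∈ Icc a (b + 1) := mem_Icc.2 ⟨hai, hib⟩
  simp only [pdC_Psi_natCast c a b _ hci]
  rw [sum_range_pow_mul_sum_powersetCard hN]
  have herase : (Icc a (b + 1)).erase i = Icc a (i - 1) ∪ Icc (i + 1) (b + 1) := by
    ext x
    simp only [mem_erase, mem_Icc, mem_union]
    omega
  calc _ = ∑ s ∈ (spacedSets a b).filter (fun s => Disjoint s (Icc (i - 1) i)),
        spacedWeight c l s * ∏ j ∈ (Icc a (b + 1)).erase i, c j := by
        rw [sum_filter (fun s => Disjoint s (Icc (i - 1) i))]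
        refine sum_congr rfl fun s hs => ?_
        simp only [mem_sdiff, hi, true_and, notMem_cover_iff]
        split_ifs
        · rw [spacedWeight, (mem_filter.1 hs).2.prod_cover, prod_inv_distrib, mul_assoc]
        · rw [mul_zero]
    _ = spacedSum c l a (i - 2) * spacedSum c l (i + 1) b
          * ((∏ j ∈ Icc a (i - 1), c j) * ∏ j ∈ Icc (i + 1) (b + 1), c j) := by
        rw [← sum_mul, sum_spacedSets_disjoint_Icc (by omega) (by omega) (by omega), herase,
          prod_union (disjoint_left.2 fun x hx hx' => by rw [mem_Icc] at hx hx'; omega)]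
        ring_nf
    _ = _ := by
        rw [continuant, continuant, show i - 2 + 1 = i - 1 by ring]
        ring

/-- The form `u Ω vᵀ` of `cBracket`, on vectors supported in `[1, p + 1]`. -/
noncomputable def bracketForm (p : ℤ) (u v : ℤ → ℝ) : ℝ :=
  ∑ i ∈ Icc 1 p, (u i * v (i + 1) - u (i + 1) * v i)

section Casoratian

variable {x : ℤ → ℝ} {l l' : ℝ} {A A' B B' : ℤ → ℝ} {p : ℤ}
  (hA1 : A 1 = 1) (hA2 : A 2 = x 1) (hA : ∀ i ≥ 1, A (i + 2) = x (i + 1) * A (i + 1) + l * A i)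
  (hA'1 : A' 1 = 1) (hA'2 : A' 2 = x 1)
  (hA' : ∀ i ≥ 1, A' (i + 2) = x (i + 1) * A' (i + 1) + l' * A' i)
  (hB : ∀ i < p, B i = x (i + 1) * B (i + 1) + l * B (i + 2))
  (hB' : ∀ i < p, B' i = x (i + 1) * B' (i + 1) + l' * B' (i + 2))
include hA1 hA2 hA hA'1 hA'2 hA' hB hB'

theorem sub_mul_bracketForm_mul {m : ℤ} (hm : 0 ≤ m) (hmp : m ≤ p) :
    (l' - l) * bracketForm m (fun i => A i * B i) (fun i => A' i * B' i)
      = (A (m + 1) * A' (m + 2) - A (m + 2) * A' (m + 1))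
        * (B m * B' (m + 1) - B (m + 1) * B' m) := by
  induction m, hm using Int.leInduction with
  | base => simp [bracketForm, hA1, hA2, hA'1, hA'2]
  | succ m hm ih =>
    rw [bracketForm] at ih ⊢
    rw [← insert_Icc_right_eq_Icc_add_one (by omega), sum_insert (by simp), add_comm, mul_add,
      ih (by omega), hB m (by omega), hB' m (by omega)]
    have eA := hA (m + 1) (by omega)
    have eA' := hA' (m + 1) (by omega)
    simp only [show m + 1 + 1 = m + 2 by ring, show m + 1 + 2 = m + 3 by ring] at eA eA' ⊢
    rw [eA, eA']
    ring

theorem bracketForm_mul_eq_zero (hl : l ≠ l') (hp : 0 ≤ p) (hBp : B p = x (p + 1))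
    (hBp1 : B (p + 1) = 1) (hB'p : B' p = x (p + 1)) (hB'p1 : B' (p + 1) = 1) :
    bracketForm p (fun i => A i * B i) (fun i => A' i * B' i) = 0 := by
  have h := sub_mul_bracketForm_mul hA1 hA2 hA hA'1 hA'2 hA' hB hB' hp le_rfl
  rw [hBp, hBp1, hB'p, hB'p1, mul_one, one_mul, sub_self, mul_zero] at h
  exact (mul_eq_zero.1 h).resolve_left (sub_ne_zero.2 hl.symm)

end Casoratian

theorem bracketForm_self (p : ℤ) (u : ℤ → ℝ) : bracketForm p u u = 0 := by
  simp [bracketForm, mul_comm]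

theorem bracketForm_congr {p : ℤ} {u u' v v' : ℤ → ℝ} (hu : ∀ i ∈ Icc 1 (p + 1), u i = u' i)
    (hv : ∀ i ∈ Icc 1 (p + 1), v i = v' i) : bracketForm p u v = bracketForm p u' v' := by
  refine sum_congr rfl fun i hi => ?_
  have h0 : i ∈ Icc 1 (p + 1) := by rw [mem_Icc] at hi ⊢; omega
  have h1 : i + 1 ∈ Icc 1 (p + 1) := by rw [mem_Icc] at hi ⊢; omega
  rw [hu i h0, hu (i + 1) h1, hv i h0, hv (i + 1) h1]

theorem bracketForm_sum_mul_sum {ι : Type*} (p : ℤ) (S : Finset ι) (f g : ι → ℝ)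
    (u : ι → ℤ → ℝ) :
    bracketForm p (fun i => ∑ j ∈ S, f j * u j i) (fun i => ∑ k ∈ S, g k * u k i)
      = ∑ j ∈ S, f j * ∑ k ∈ S, g k * bracketForm p (u j) (u k) := by
  unfold bracketForm
  simp_rw [sum_mul_sum, ← sum_sub_distrib, mul_sum]
  rw [sum_comm]
  refine sum_congr rfl fun j _ => ?_
  rw [sum_comm]
  refine sum_congr rfl fun k _ => sum_congr rfl fun i _ => ?_
  ring

theorem bracketForm_continuant {c : ℤ → ℝ} (hc : ∀ j, c j ≠ 0) {p : ℤ} (hp : 0 ≤ p) (l l' : ℝ) :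
    bracketForm p (fun i => continuant c l 1 (i - 2) * continuant c l (i + 1) p)
      (fun i => continuant c l' 1 (i - 2) * continuant c l' (i + 1) p) = 0 := by
  rcases eq_or_ne l l' with rfl | hl
  · exact bracketForm_self p _
  have hA : ∀ l : ℝ, ∀ i ≥ 1, continuant c l 1 (i + 2 - 2)
      = c (i + 1) * continuant c l 1 (i + 1 - 2) + l * continuant c l 1 (i - 2) := by
    intro l i hi
    rw [show i + 2 - 2 = i by ring, show i + 1 - 2 = i - 1 by ring,
      continuant_expand_right hi (hc i) (hc (i + 1))]
  have hB : ∀ l : ℝ, ∀ i < p, continuant c l (i + 1) p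
      = c (i + 1) * continuant c l (i + 1 + 1) p + l * continuant c l (i + 2 + 1) p := by
    intro l i hi
    rw [continuant_expand_left (by omega) (hc (i + 1)) (hc (i + 1 + 1)), add_right_comm i 2 1]
  exact bracketForm_mul_eq_zero (continuant_of_add_two_eq (by norm_num))
    (continuant_of_add_one_eq (by norm_num)) (hA l) (continuant_of_add_two_eq (by norm_num))
    (continuant_of_add_one_eq (by norm_num)) (hA l') (hB l) (hB l') hl hp
    (continuant_of_add_one_eq rfl) (continuant_of_add_two_eq (by ring))
    (continuant_of_add_one_eq rfl) (continuant_of_add_two_eq (by ring))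

theorem cBracket_eq_bracketForm {n : ℕ} {p : ℤ} (hp : p ≤ 2 * n - 1) {g h : (ℤ → ℝ) → ℝ}
    {c : ℤ → ℝ} (hg : ∀ j, p + 1 < j → pdC g j c = 0) (hh : ∀ j, p + 1 < j → pdC h j c = 0) :
    cBracket n g h c = bracketForm p (fun i => pdC g i c) (fun i => pdC h i c) := by
  refine (sum_subset (Icc_subset_Icc le_rfl hp) fun i hi hip => ?_).symm
  have : p < i := by
    by_contra
    exact hip (mem_Icc.2 ⟨(mem_Icc.1 hi).1, by omega⟩)
  rw [hg (i + 1) (by omega), hh (i + 1) (by omega), mul_zero, zero_mul, sub_zero]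

theorem bracketForm_pdC_Psi_eq_zero {c : ℤ → ℝ} (hc : ∀ j, c j ≠ 0) {p : ℤ} (hp : 0 ≤ p)
    (r s : ℕ) :
    bracketForm p (fun i => pdC (fun c => Psi c 1 p r) i c)
      (fun i => pdC (fun c => Psi c 1 p s) i c) = 0 := by
  set N := r + s + #(Icc (1 : ℤ) p)
  set d : ℕ → ℤ → ℝ := fun k i => pdC (fun c => Psi c 1 p k) i c
  have hgen : ∀ (l : ℝ), ∀ i ∈ Icc 1 (p + 1),
      ∑ k ∈ range (N + 1), l ^ k * d k i = continuant c l 1 (i - 2) * continuant c l (i + 1) p :=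
    fun l i hi => sum_pow_mul_pdC_Psi (mem_Icc.1 hi).1 (mem_Icc.1 hi).2 (hc i) l (by omega)
  have hexpand : ∀ x y : ℝ, ∑ j ∈ range (N + 1), x ^ j *
      ∑ k ∈ range (N + 1), y ^ k * bracketForm p (d j) (d k) = 0 := fun x y => by
    rw [← bracketForm_sum_mul_sum, ← bracketForm_continuant hc hp x y]
    exact bracketForm_congr (hgen x) (hgen y)
  exact eq_zero_of_forall_sum_pow_mul_eq_zero
    (fun y => eq_zero_of_forall_sum_pow_mul_eq_zero (fun x => hexpand x y) (by omega)) (by omega)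

theorem psi_bracket_zero_general (n : ℕ) (p : ℤ) (hp1 : 1 ≤ p) (hp : p ≤ 2 * n - 2)
    (c : ℤ → ℝ) (hc : ∀ i, c i ≠ 0) (r s : ℤ)
    (hr0 : 0 ≤ r) (hs0 : 0 ≤ s) :
    cBracket n (fun c => Psi c 1 p r) (fun c => Psi c 1 p s) c = 0 := by
  lift r to ℕ using hr0
  lift s to ℕ using hs0
  have hvanish : ∀ k : ℕ, ∀ j, p + 1 < j → pdC (fun c => Psi c 1 p k) j c = 0 :=
    fun k j hj => pdC_Psi_natCast_of_lt hj (hc j) k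
  rw [cBracket_eq_bracketForm (by omega) (hvanish r) (hvanish s)]
  exact bracketForm_pdC_Psi_eq_zero hc (by omega) r s

/-- `{Ψ^{1,p}_r, Ψ^{1,p}_s}_c = 0` for all `0 ≤ r, s ≤ ⌊(p+1)/2⌋`, where `p ≤ 2n − 2`. -/
theorem psi_bracket_zero (n : ℕ) (p : ℤ) (hp1 : 1 ≤ p) (hp : p ≤ 2 * n - 2)
    (c : ℤ → ℝ) (hc : ∀ i, c i ≠ 0) (r s : ℤ)
    (hr0 : 0 ≤ r) (hr : r ≤ (p + 1) / 2) (hs0 : 0 ≤ s) (hs : s ≤ (p + 1) / 2) :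
    cBracket n (fun c => Psi c 1 p r) (fun c => Psi c 1 p s) c = 0 :=
  psi_bracket_zero_general n p hp1 hp c hc r s hr0 hs0
end
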